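/- arXiv:1108.1385 — 2 statements merged into one kernel-verified Lean document; each statement's English description precedes it below -/
import Mathlib

section
/- (Agarwal relation between Moyal and normal quantization.) Let H : ℝ³ → ℂ be smooth with ∂_θ H = 0 and polynomial in (p,q) (all iterated derivatives in p and q of sufficiently high total order vanish identically), and let Ψ : ℝ³ → ℂ be a polarized prequantum wave function (∂_θ Ψ = iΨ, ∂_p Ψ = 0). Set H' := Σ_{j≥0} (iħ/2)^j (1/j!) Δ^j H where Δ = −∂_q∂_p (a finite sum). Then for every x ∈ ℝ³, Σ_{k≥0} (ħ/i)^k (1/k!) (Π^k (H ⊗ Ψ))(x,x) = Σ_{k≥0} (ħ/i)^k (1/k!) (N^k (H' ⊗ Ψ))(x,x), i.e. H •π Ψ = (exp((iħ/2)Δ)H) •ν Ψ. -/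
open Complex

/-- Partial derivative in the `p` (first) coordinate. -/
noncomputable def dP (f : ℝ × ℝ × ℝ → ℂ) : ℝ × ℝ × ℝ → ℂ :=
  fun x => deriv (fun s => f (s, x.2.1, x.2.2)) x.1

/-- Partial derivative in the `q` (second) coordinate. -/
noncomputable def dQ (f : ℝ × ℝ × ℝ → ℂ) : ℝ × ℝ × ℝ → ℂ :=
  fun x => deriv (fun s => f (x.1, s, x.2.2)) x.2.1

/-- Partial derivative in the fiber coordinate `θ` (third coordinate). -/
noncomputable def dT (f : ℝ × ℝ × ℝ → ℂ) : ℝ × ℝ × ℝ → ℂ :=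
  fun x => deriv (fun s => f (x.1, x.2.1, s)) x.2.2

/-- Horizontal lift of `∂_q`: the operator `B = ∂_q − (p/ħ) ∂_θ`. -/
noncomputable def Bop (hb : ℝ) (f : ℝ × ℝ × ℝ → ℂ) : ℝ × ℝ × ℝ → ℂ :=
  fun x => dQ f x - ((x.1 / hb : ℝ) : ℂ) * dT f x

/-- The Souriau bracket `⟦f,g⟧ = (∂_p f)(B g) − (∂_p g)(B f)`. -/
noncomputable def souriau (hb : ℝ) (f g : ℝ × ℝ × ℝ → ℂ) : ℝ × ℝ × ℝ → ℂ :=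
  fun x => dP f x * Bop hb g x - dP g x * Bop hb f x

/-- Lift an operator on `ℝ³ → ℂ` to act in the first factor of `ℝ³ × ℝ³`. -/
noncomputable def L1 (op : (ℝ × ℝ × ℝ → ℂ) → ℝ × ℝ × ℝ → ℂ)
    (u : (ℝ × ℝ × ℝ) × (ℝ × ℝ × ℝ) → ℂ) : (ℝ × ℝ × ℝ) × (ℝ × ℝ × ℝ) → ℂ :=
  fun z => op (fun x => u (x, z.2)) z.1

/-- Lift an operator on `ℝ³ → ℂ` to act in the second factor of `ℝ³ × ℝ³`. -/
noncomputable def L2 (op : (ℝ × ℝ × ℝ → ℂ) → ℝ × ℝ × ℝ → ℂ)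
    (u : (ℝ × ℝ × ℝ) × (ℝ × ℝ × ℝ) → ℂ) : (ℝ × ℝ × ℝ) × (ℝ × ℝ × ℝ) → ℂ :=
  fun z => op (fun y => u (z.1, y)) z.2

/-- The tensor product `(F ⊗ Ψ)(x,y) = F(x)·Ψ(y)`. -/
noncomputable def tens (F Ψ : ℝ × ℝ × ℝ → ℂ) : (ℝ × ℝ × ℝ) × (ℝ × ℝ × ℝ) → ℂ :=
  fun z => F z.1 * Ψ z.2

/-- The lifted normal tensor: `N u = ∂_{p₁}(B₂ u)`. -/
noncomputable def Nop (hb : ℝ) (u : (ℝ × ℝ × ℝ) × (ℝ × ℝ × ℝ) → ℂ) :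
    (ℝ × ℝ × ℝ) × (ℝ × ℝ × ℝ) → ℂ :=
  L1 dP (L2 (Bop hb) u)

/-- The lifted anti-normal tensor: `M u = −B₁(∂_{p₂} u)`. -/
noncomputable def Mop (hb : ℝ) (u : (ℝ × ℝ × ℝ) × (ℝ × ℝ × ℝ) → ℂ) :
    (ℝ × ℝ × ℝ) × (ℝ × ℝ × ℝ) → ℂ :=
  fun z => -(L1 (Bop hb) (L2 dP u) z)

/-- The lifted Poisson bivector: `Π u = ∂_{p₁}(B₂ u) − B₁(∂_{p₂} u) = N u + M u`. -/
noncomputable def Piop (hb : ℝ) (u : (ℝ × ℝ × ℝ) × (ℝ × ℝ × ℝ) → ℂ) :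
    (ℝ × ℝ × ℝ) × (ℝ × ℝ × ℝ) → ℂ :=
  fun z => Nop hb u z + Mop hb u z

/-- The Yano Laplacian `Δ = −∂_q ∂_p`. -/
noncomputable def Yano (f : ℝ × ℝ × ℝ → ℂ) : ℝ × ℝ × ℝ → ℂ :=
  fun x => -(dQ (dP f) x)

section Infra
open ContDiff

abbrev E3 := ℝ × ℝ × ℝ

lemma two_le_inf : (2 : WithTop ℕ∞) ≤ ∞ := by
  rw [show ((2:WithTop ℕ∞)) = ((2:ℕ∞) : WithTop ℕ∞) by rfl]
  exact WithTop.coe_le_coe.mpr le_top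

lemma one_le_inf : (1 : WithTop ℕ∞) ≤ ∞ := le_trans (by norm_num) two_le_inf

/-- Smoothness predicate. -/
def Sm (f : E3 → ℂ) : Prop := ContDiff ℝ ∞ f

/-- directional derivative -/
noncomputable def Dv (v : E3) (f : E3 → ℂ) : E3 → ℂ := fun x => fderiv ℝ f x v

lemma hasDerivAt_sliceP {f : E3 → ℂ} {x : E3} (hf : DifferentiableAt ℝ f x) :
    HasDerivAt (fun s => f (s, x.2.1, x.2.2)) (fderiv ℝ f x (1,0,0)) x.1 := by
  have h1 : HasDerivAt (fun s : ℝ => ((s, x.2.1, x.2.2) : E3)) ((1:ℝ),(0:ℝ),(0:ℝ)) x.1 :=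
    (hasDerivAt_id x.1).prodMk (hasDerivAt_const _ _)
  have := hf.hasFDerivAt.comp_hasDerivAt x.1 (by simpa using h1)
  exact this

lemma hasDerivAt_sliceQ {f : E3 → ℂ} {x : E3} (hf : DifferentiableAt ℝ f x) :
    HasDerivAt (fun s => f (x.1, s, x.2.2)) (fderiv ℝ f x (0,1,0)) x.2.1 := by
  have h1 : HasDerivAt (fun s : ℝ => ((x.1, s, x.2.2) : E3)) ((0:ℝ),(1:ℝ),(0:ℝ)) x.2.1 :=
    (hasDerivAt_const _ _).prodMk ((hasDerivAt_id x.2.1).prodMk (hasDerivAt_const _ _))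
  have := hf.hasFDerivAt.comp_hasDerivAt x.2.1 (by simpa using h1)
  exact this

lemma hasDerivAt_sliceT {f : E3 → ℂ} {x : E3} (hf : DifferentiableAt ℝ f x) :
    HasDerivAt (fun s => f (x.1, x.2.1, s)) (fderiv ℝ f x (0,0,1)) x.2.2 := by
  have h1 : HasDerivAt (fun s : ℝ => ((x.1, x.2.1, s) : E3)) ((0:ℝ),(0:ℝ),(1:ℝ)) x.2.2 :=
    (hasDerivAt_const _ _).prodMk ((hasDerivAt_const _ _).prodMk (hasDerivAt_id x.2.2))
  have := hf.hasFDerivAt.comp_hasDerivAt x.2.2 (by simpa using h1)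
  exact this

lemma dP_eq_Dv {f : E3 → ℂ} (hf : Sm f) : dP f = Dv (1,0,0) f := by
  funext x
  exact ((hasDerivAt_sliceP ((hf.differentiable (by simp)).differentiableAt)).deriv :)

lemma dQ_eq_Dv {f : E3 → ℂ} (hf : Sm f) : dQ f = Dv (0,1,0) f := by
  funext x
  exact ((hasDerivAt_sliceQ ((hf.differentiable (by simp)).differentiableAt)).deriv :)

lemma dT_eq_Dv {f : E3 → ℂ} (hf : Sm f) : dT f = Dv (0,0,1) f := by
  funext x
  exact ((hasDerivAt_sliceT ((hf.differentiable (by simp)).differentiableAt)).deriv :)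

lemma Dv_smooth (v : E3) {f : E3 → ℂ} (hf : Sm f) : Sm (Dv v f) :=
  (hf.fderiv_right (m := ∞) (by simp)).clm_apply contDiff_const

lemma dP_smooth {f : E3 → ℂ} (hf : Sm f) : Sm (dP f) := by
  rw [dP_eq_Dv hf]; exact Dv_smooth _ hf

lemma dQ_smooth {f : E3 → ℂ} (hf : Sm f) : Sm (dQ f) := by
  rw [dQ_eq_Dv hf]; exact Dv_smooth _ hf

lemma dT_smooth {f : E3 → ℂ} (hf : Sm f) : Sm (dT f) := by
  rw [dT_eq_Dv hf]; exact Dv_smooth _ hf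

lemma Dv_comm (v w : E3) {f : E3 → ℂ} (hf : Sm f) : Dv v (Dv w f) = Dv w (Dv v f) := by
  funext x
  have hd : DifferentiableAt ℝ (fderiv ℝ f) x :=
    ((hf.fderiv_right (m := ∞) (by simp)).differentiable (by simp)).differentiableAt
  have key : ∀ u : E3, fderiv ℝ (fun y => fderiv ℝ f y u) x
      = ((ContinuousLinearMap.apply ℝ ℂ u).comp (fderiv ℝ (fderiv ℝ f) x)) := fun u =>
    (((ContinuousLinearMap.apply ℝ ℂ u).hasFDerivAt).comp x hd.hasFDerivAt).fderiv
  show fderiv ℝ (fun y => fderiv ℝ f y w) x v = fderiv ℝ (fun y => fderiv ℝ f y v) x w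
  rw [key v, key w]
  have hs : IsSymmSndFDerivAt ℝ f x := (hf.contDiffAt).isSymmSndFDerivAt (by simpa using two_le_inf)
  simpa using (hs v w)

lemma dPdQ_comm {f : E3 → ℂ} (hf : Sm f) : dP (dQ f) = dQ (dP f) := by
  rw [dQ_eq_Dv hf, dP_eq_Dv hf, dP_eq_Dv (Dv_smooth _ hf), dQ_eq_Dv (Dv_smooth _ hf)]
  exact Dv_comm _ _ hf

lemma dTdP_comm {f : E3 → ℂ} (hf : Sm f) : dT (dP f) = dP (dT f) := by
  rw [dP_eq_Dv hf, dT_eq_Dv hf, dT_eq_Dv (Dv_smooth _ hf), dP_eq_Dv (Dv_smooth _ hf)]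
  exact Dv_comm _ _ hf

lemma dTdQ_comm {f : E3 → ℂ} (hf : Sm f) : dT (dQ f) = dQ (dT f) := by
  rw [dQ_eq_Dv hf, dT_eq_Dv hf, dT_eq_Dv (Dv_smooth _ hf), dQ_eq_Dv (Dv_smooth _ hf)]
  exact Dv_comm _ _ hf

end Infra
section Infra2
open ContDiff Complex

lemma dP_const_mul (c : ℂ) (f : E3 → ℂ) :
    dP (fun x => c * f x) = fun x => c * dP f x := by
  funext x; exact deriv_const_mul_field c

lemma dQ_const_mul (c : ℂ) (f : E3 → ℂ) :
    dQ (fun x => c * f x) = fun x => c * dQ f x := by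
  funext x; exact deriv_const_mul_field c

lemma dT_const_mul (c : ℂ) (f : E3 → ℂ) :
    dT (fun x => c * f x) = fun x => c * dT f x := by
  funext x; exact deriv_const_mul_field c

lemma Bop_const_mul (hb : ℝ) (c : ℂ) (f : E3 → ℂ) :
    Bop hb (fun x => c * f x) = fun x => c * Bop hb f x := by
  funext x
  simp only [Bop, dQ_const_mul, dT_const_mul]
  ring

/-- the coefficient function x ↦ (x.1/hb : ℂ) -/
noncomputable def pco (hb : ℝ) : E3 → ℂ := fun x => ((x.1 / hb : ℝ) : ℂ)

lemma pco_smooth (hb : ℝ) : Sm (pco hb) :=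
  Complex.ofRealCLM.contDiff.comp ((contDiff_fst).div_const hb)

lemma Bop_smooth {hb : ℝ} {f : E3 → ℂ} (hf : Sm f) : Sm (Bop hb f) := by
  have : Bop hb f = fun x => dQ f x - pco hb x * dT f x := rfl
  rw [this]
  exact (dQ_smooth hf).sub ((pco_smooth hb).mul (dT_smooth hf))

/-- `dT` of a function that is `(p/hb) * g` : the factor is constant along θ-slices. -/
lemma dT_pco_mul (hb : ℝ) (f : E3 → ℂ) :
    dT (fun x => pco hb x * f x) = fun x => pco hb x * dT f x := by
  funext x; simp only [dT, pco]; exact deriv_const_mul_field _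

lemma dQ_pco_mul (hb : ℝ) (f : E3 → ℂ) :
    dQ (fun x => pco hb x * f x) = fun x => pco hb x * dQ f x := by
  funext x; simp only [dQ, pco]; exact deriv_const_mul_field _

lemma dP_pco_mul (hb : ℝ) {f : E3 → ℂ} (hf : Sm f) :
    dP (fun x => pco hb x * f x) = fun x => ((1/hb : ℝ) : ℂ) * f x + pco hb x * dP f x := by
  funext x
  have hsl : HasDerivAt (fun s => f (s, x.2.1, x.2.2)) (dP f x) x.1 :=
    (hasDerivAt_sliceP ((hf.differentiable (by simp)).differentiableAt)).congr_deriv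
      (by rw [dP]; exact ((hasDerivAt_sliceP ((hf.differentiable (by simp)).differentiableAt)).deriv).symm)
  have hc : HasDerivAt (fun s : ℝ => ((s / hb : ℝ) : ℂ)) (((1/hb : ℝ) : ℂ)) x.1 := by
    have : HasDerivAt (fun s : ℝ => s / hb) (1/hb) x.1 := (hasDerivAt_id x.1).div_const hb
    simpa using this.ofReal_comp
  have := hc.fun_mul hsl
  simpa [pco, dP, mul_comm] using this.deriv

lemma dP_mul_const (f : E3 → ℂ) (c : ℂ) :
    dP (fun x => f x * c) = fun x => dP f x * c := by
  funext x; exact deriv_mul_const_field c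

lemma dQ_mul_const (f : E3 → ℂ) (c : ℂ) :
    dQ (fun x => f x * c) = fun x => dQ f x * c := by
  funext x; exact deriv_mul_const_field c

lemma dT_mul_const (f : E3 → ℂ) (c : ℂ) :
    dT (fun x => f x * c) = fun x => dT f x * c := by
  funext x; exact deriv_mul_const_field c

lemma Bop_mul_const (hb : ℝ) (f : E3 → ℂ) (c : ℂ) :
    Bop hb (fun x => f x * c) = fun x => Bop hb f x * c := by
  funext x
  simp only [Bop, dQ_mul_const, dT_mul_const]
  ring

lemma dP_sum {ι : Type*} (s : Finset ι) (f : ι → E3 → ℂ) (hf : ∀ i ∈ s, Sm (f i)) :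
    dP (fun x => ∑ i ∈ s, f i x) = fun x => ∑ i ∈ s, dP (f i) x := by
  funext x
  have : ∀ i ∈ s, HasDerivAt (fun t => f i (t, x.2.1, x.2.2)) (dP (f i) x) x.1 := fun i hi => by
    have h := hasDerivAt_sliceP (((hf i hi).differentiable (by simp)).differentiableAt (x := x))
    rwa [← h.deriv] at h
  exact (HasDerivAt.fun_sum this).deriv

lemma dQ_sum {ι : Type*} (s : Finset ι) (f : ι → E3 → ℂ) (hf : ∀ i ∈ s, Sm (f i)) :
    dQ (fun x => ∑ i ∈ s, f i x) = fun x => ∑ i ∈ s, dQ (f i) x := by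
  funext x
  have : ∀ i ∈ s, HasDerivAt (fun t => f i (x.1, t, x.2.2)) (dQ (f i) x) x.2.1 := fun i hi => by
    have h := hasDerivAt_sliceQ (((hf i hi).differentiable (by simp)).differentiableAt (x := x))
    rwa [← h.deriv] at h
  exact (HasDerivAt.fun_sum this).deriv

lemma dT_sum {ι : Type*} (s : Finset ι) (f : ι → E3 → ℂ) (hf : ∀ i ∈ s, Sm (f i)) :
    dT (fun x => ∑ i ∈ s, f i x) = fun x => ∑ i ∈ s, dT (f i) x := by
  funext x
  have : ∀ i ∈ s, HasDerivAt (fun t => f i (x.1, x.2.1, t)) (dT (f i) x) x.2.2 := fun i hi => by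
    have h := hasDerivAt_sliceT (((hf i hi).differentiable (by simp)).differentiableAt (x := x))
    rwa [← h.deriv] at h
  exact (HasDerivAt.fun_sum this).deriv

lemma Bop_sum {ι : Type*} (hb : ℝ) (s : Finset ι) (f : ι → E3 → ℂ) (hf : ∀ i ∈ s, Sm (f i)) :
    Bop hb (fun x => ∑ i ∈ s, f i x) = fun x => ∑ i ∈ s, Bop hb (f i) x := by
  funext x
  simp only [Bop, dQ_sum s f hf, dT_sum s f hf, Finset.mul_sum]
  rw [Finset.sum_sub_distrib]

lemma dP_sub {f g : E3 → ℂ} (hf : Sm f) (hg : Sm g) :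
    dP (fun x => f x - g x) = fun x => dP f x - dP g x := by
  funext x
  have h1 : HasDerivAt (fun t => f (t, x.2.1, x.2.2)) (dP f x) x.1 := by
    have h := hasDerivAt_sliceP ((hf.differentiable (by simp)).differentiableAt (x := x))
    rwa [← h.deriv] at h
  have h2 : HasDerivAt (fun t => g (t, x.2.1, x.2.2)) (dP g x) x.1 := by
    have h := hasDerivAt_sliceP ((hg.differentiable (by simp)).differentiableAt (x := x))
    rwa [← h.deriv] at h
  exact (h1.sub h2).deriv

lemma dT_sub {f g : E3 → ℂ} (hf : Sm f) (hg : Sm g) :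
    dT (fun x => f x - g x) = fun x => dT f x - dT g x := by
  funext x
  have h1 : HasDerivAt (fun t => f (x.1, x.2.1, t)) (dT f x) x.2.2 := by
    have h := hasDerivAt_sliceT ((hf.differentiable (by simp)).differentiableAt (x := x))
    rwa [← h.deriv] at h
  have h2 : HasDerivAt (fun t => g (x.1, x.2.1, t)) (dT g x) x.2.2 := by
    have h := hasDerivAt_sliceT ((hg.differentiable (by simp)).differentiableAt (x := x))
    rwa [← h.deriv] at h
  exact (h1.sub h2).deriv

end Infra2
section Infra3
open ContDiff Complex

lemma Bop_eq (hb : ℝ) (f : E3 → ℂ) :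
    Bop hb f = fun x => dQ f x - pco hb x * dT f x := rfl

lemma dT_Bop_comm (hb : ℝ) {f : E3 → ℂ} (hf : Sm f) :
    dT (Bop hb f) = Bop hb (dT f) := by
  rw [Bop_eq, dT_sub (dQ_smooth hf) ((pco_smooth hb).mul (dT_smooth hf)),
      dT_pco_mul, dTdQ_comm hf, Bop_eq]

lemma dP_Bop_comm (hb : ℝ) {f : E3 → ℂ} (hf : Sm f) :
    dP (Bop hb f) = fun x => Bop hb (dP f) x - ((1/hb : ℝ) : ℂ) * dT f x := by
  rw [Bop_eq, dP_sub (dQ_smooth hf) ((pco_smooth hb).mul (dT_smooth hf)),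
      dP_pco_mul hb (dT_smooth hf), dPdQ_comm hf, ← dTdP_comm hf, Bop_eq]
  funext x
  ring

/-- iterated mixed partial, canonical order -/
noncomputable def HH (H : E3 → ℂ) (c d : ℕ) : E3 → ℂ := dQ^[c] (dP^[d] H)

noncomputable def PP (hb : ℝ) (Ψ : E3 → ℂ) (m : ℕ) : E3 → ℂ := (Bop hb)^[m] Ψ

lemma dP_iter_smooth {f : E3 → ℂ} (hf : Sm f) (d : ℕ) : Sm (dP^[d] f) := by
  induction d with
  | zero => exact hf
  | succ d ih => rw [Function.iterate_succ_apply']; exact dP_smooth ih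

lemma dQ_iter_smooth {f : E3 → ℂ} (hf : Sm f) (c : ℕ) : Sm (dQ^[c] f) := by
  induction c with
  | zero => exact hf
  | succ c ih => rw [Function.iterate_succ_apply']; exact dQ_smooth ih

lemma HH_smooth {H : E3 → ℂ} (hH : Sm H) (c d : ℕ) : Sm (HH H c d) :=
  dQ_iter_smooth (dP_iter_smooth hH d) c

lemma PP_smooth {hb : ℝ} {Ψ : E3 → ℂ} (hΨ : Sm Ψ) (m : ℕ) : Sm (PP hb Ψ m) := by
  induction m with
  | zero => exact hΨ
  | succ m ih =>
      rw [PP, Function.iterate_succ_apply']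
      exact Bop_smooth ih

lemma PP_succ (hb : ℝ) (Ψ : E3 → ℂ) (m : ℕ) :
    PP hb Ψ (m+1) = Bop hb (PP hb Ψ m) := by
  rw [PP, Function.iterate_succ_apply']; rfl

lemma HH_succ_c (H : E3 → ℂ) (c d : ℕ) : HH H (c+1) d = dQ (HH H c d) := by
  rw [HH, Function.iterate_succ_apply']; rfl

lemma dP_zero_fun : dP (0 : E3 → ℂ) = 0 := by
  funext x
  simp [dP]

lemma dT_dP_zero {f : E3 → ℂ} (hf : Sm f) (h : dT f = 0) : dT (dP f) = 0 := by
  rw [dTdP_comm hf, h, dP_zero_fun]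

lemma dT_dQ_zero {f : E3 → ℂ} (hf : Sm f) (h : dT f = 0) : dT (dQ f) = 0 := by
  rw [dTdQ_comm hf, h]
  funext x
  simp [dQ]

lemma dT_HH {H : E3 → ℂ} (hH : Sm H) (hobs : dT H = 0) (c d : ℕ) :
    dT (HH H c d) = 0 := by
  have base : ∀ d, dT (dP^[d] H) = 0 := by
    intro d
    induction d with
    | zero => exact hobs
    | succ d ih =>
        rw [Function.iterate_succ_apply']
        exact dT_dP_zero (dP_iter_smooth hH d) ih
  induction c with
  | zero => exact base d
  | succ c ih =>
      rw [HH_succ_c]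
      exact dT_dQ_zero (HH_smooth hH c d) ih

lemma Bop_HH {hb : ℝ} {H : E3 → ℂ} (hH : Sm H) (hobs : dT H = 0) (c d : ℕ) :
    Bop hb (HH H c d) = HH H (c+1) d := by
  rw [Bop_eq, dT_HH hH hobs c d, HH_succ_c]
  funext x
  simp

lemma dP_dQ_iter {f : E3 → ℂ} (hf : Sm f) (c : ℕ) :
    dP (dQ^[c] f) = dQ^[c] (dP f) := by
  induction c with
  | zero => rfl
  | succ c ih =>
      rw [Function.iterate_succ_apply', Function.iterate_succ_apply',
          dPdQ_comm (dQ_iter_smooth hf c), ih]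

lemma dP_HH {H : E3 → ℂ} (hH : Sm H) (c d : ℕ) :
    dP (HH H c d) = HH H c (d+1) := by
  rw [HH, dP_dQ_iter (dP_iter_smooth hH d), HH, Function.iterate_succ_apply']

lemma dQ_dP_iter_swap {f : E3 → ℂ} (hf : Sm f) (c d : ℕ) :
    dQ^[c] (dP^[d] f) = dP^[d] (dQ^[c] f) := by
  induction d generalizing f with
  | zero => rfl
  | succ d ih =>
      rw [Function.iterate_succ_apply, Function.iterate_succ_apply,
          ih (dP_smooth hf), ← dP_dQ_iter hf]

end Infra3
section Infra4
open ContDiff Complex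

variable {hb : ℝ} {H Ψ : E3 → ℂ}

lemma dT_PP (hhb : hb ≠ 0) (hΨ : Sm Ψ) (hpol : dT Ψ = fun x => Complex.I * Ψ x) (m : ℕ) :
    dT (PP hb Ψ m) = fun x => Complex.I * PP hb Ψ m x := by
  induction m with
  | zero => exact hpol
  | succ m ih =>
      rw [PP_succ, dT_Bop_comm hb (PP_smooth hΨ m), ih, Bop_const_mul]

lemma Bop_zero_fun (hb : ℝ) : Bop hb (0 : E3 → ℂ) = 0 := by
  have : (0 : E3 → ℂ) = fun x => (0:ℂ) * (0 : E3 → ℂ) x := by funext x; simp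
  rw [this, Bop_const_mul]
  funext x; simp

lemma cast_mul_Bop_PP (m : ℕ) (x : E3) :
    ((m:ℂ)) * Bop hb (PP hb Ψ (m-1)) x = (m:ℂ) * PP hb Ψ m x := by
  cases m with
  | zero => simp
  | succ n => rw [Nat.add_sub_cancel, ← PP_succ]

lemma dP_PP (hhb : hb ≠ 0) (hΨ : Sm Ψ) (hpol : dT Ψ = fun x => Complex.I * Ψ x)
    (hP : dP Ψ = 0) (m : ℕ) :
    dP (PP hb Ψ m) = fun x => -((m : ℂ) * Complex.I / hb) * PP hb Ψ (m-1) x := by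
  induction m with
  | zero =>
      rw [PP, Function.iterate_zero_apply, hP]
      funext x; simp
  | succ m ih =>
      rw [PP_succ, dP_Bop_comm hb (PP_smooth hΨ m), ih, dT_PP hhb hΨ hpol m, Bop_const_mul]
      funext x
      have h1 := cast_mul_Bop_PP (hb:=hb) (Ψ:=Ψ) m x
      rw [Nat.add_sub_cancel]
      push_cast
      linear_combination (-(Complex.I / (hb:ℂ))) * h1

lemma Yano_iter (hH : Sm H) (j : ℕ) :
    Yano^[j] H = fun x => (-1 : ℂ)^j * HH H j j x := by
  induction j with
  | zero => funext x; simp [HH]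
  | succ j ih =>
      rw [Function.iterate_succ_apply', ih]
      have h1 : dP (fun x => (-1 : ℂ)^j * HH H j j x) = fun x => (-1:ℂ)^j * HH H j (j+1) x := by
        rw [dP_const_mul, dP_HH hH]
      have h2 : dQ (fun x => (-1 : ℂ)^j * HH H j (j+1) x)
          = fun x => (-1:ℂ)^j * HH H (j+1) (j+1) x := by
        rw [dQ_const_mul, ← HH_succ_c]
      funext x
      show -(dQ (dP fun x => (-1 : ℂ)^j * HH H j j x) x) = _
      rw [h1, h2]
      ring

lemma HH_vanish {N0 : ℕ} (hH : Sm H)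
    (hpoly : ∀ a b : ℕ, N0 < a + b → dP^[a] (dQ^[b] H) = 0)
    (c d : ℕ) (h : N0 < c + d) : HH H c d = 0 := by
  rw [HH, dQ_dP_iter_swap hH]
  exact hpoly d c (by omega)

end Infra4
section Infra5
open ContDiff Complex

variable {hb : ℝ}

lemma Sm_cF {ι : Type*} (a : ι → ℂ) (F : ι → E3 → ℂ) {i : ι} (hF : Sm (F i)) (c : ℂ) :
    Sm (fun x => a i * F i x * c) := (contDiff_const.mul hF).mul contDiff_const

lemma Nop_sum_tens {ι : Type*} (s : Finset ι) (a : ι → ℂ) (F G : ι → E3 → ℂ)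
    (hF : ∀ i ∈ s, Sm (F i)) (hG : ∀ i ∈ s, Sm (G i)) :
    Nop hb (fun z => ∑ i ∈ s, a i * F i z.1 * G i z.2)
      = fun z => ∑ i ∈ s, a i * dP (F i) z.1 * Bop hb (G i) z.2 := by
  funext z
  show dP (fun x => Bop hb (fun y => ∑ i ∈ s, a i * F i x * G i y) z.2) z.1 = _
  have step1 : (fun x => Bop hb (fun y => ∑ i ∈ s, a i * F i x * G i y) z.2)
      = fun x => ∑ i ∈ s, a i * F i x * Bop hb (G i) z.2 := by
    funext x
    rw [Bop_sum hb s (fun i y => a i * F i x * G i y)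
      (fun i hi => contDiff_const.mul (hG i hi))]
    exact Finset.sum_congr rfl fun i hi => congrFun (Bop_const_mul hb (a i * F i x) (G i)) z.2
  rw [step1, dP_sum s _ (fun i hi => Sm_cF a F (hF i hi) _)]
  refine Finset.sum_congr rfl fun i hi => ?_
  have h2 : dP (fun x => a i * F i x * Bop hb (G i) z.2)
      = fun x => a i * dP (F i) x * Bop hb (G i) z.2 := by
    rw [dP_mul_const (fun x => a i * F i x) (Bop hb (G i) z.2), dP_const_mul]
  exact congrFun h2 z.1

lemma Mop_sum_tens {ι : Type*} (s : Finset ι) (a : ι → ℂ) (F G : ι → E3 → ℂ)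
    (hF : ∀ i ∈ s, Sm (F i)) (hG : ∀ i ∈ s, Sm (G i)) :
    Mop hb (fun z => ∑ i ∈ s, a i * F i z.1 * G i z.2)
      = fun z => ∑ i ∈ s, -(a i * Bop hb (F i) z.1 * dP (G i) z.2) := by
  funext z
  show -(Bop hb (fun x => dP (fun y => ∑ i ∈ s, a i * F i x * G i y) z.2) z.1) = _
  have step1 : (fun x => dP (fun y => ∑ i ∈ s, a i * F i x * G i y) z.2)
      = fun x => ∑ i ∈ s, a i * F i x * dP (G i) z.2 := by
    funext x
    rw [dP_sum s (fun i y => a i * F i x * G i y)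
      (fun i hi => contDiff_const.mul (hG i hi))]
    exact Finset.sum_congr rfl fun i hi => congrFun (dP_const_mul (a i * F i x) (G i)) z.2
  rw [step1, Bop_sum hb s _ (fun i hi => Sm_cF a F (hF i hi) _)]
  rw [← Finset.sum_neg_distrib]
  refine Finset.sum_congr rfl fun i hi => ?_
  have h2 : Bop hb (fun x => a i * F i x * dP (G i) z.2)
      = fun x => a i * Bop hb (F i) x * dP (G i) z.2 := by
    rw [Bop_mul_const hb (fun x => a i * F i x) (dP (G i) z.2), Bop_const_mul]
  rw [congrFun h2 z.1]

end Infra5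
section Infra6
open Complex

noncomputable def cc (hb : ℝ) : ℕ → ℕ → ℂ
  | 0, 0 => 1
  | 0, _+1 => 0
  | (k+1), 0 => cc hb k 0
  | (k+1), (j+1) => cc hb k (j+1) + ((k - 2*j : ℕ) : ℂ) * (Complex.I/hb) * cc hb k j

lemma fact_ne_zero (n : ℕ) : ((Nat.factorial n : ℕ) : ℂ) ≠ 0 :=
  Nat.cast_ne_zero.mpr (Nat.factorial_ne_zero n)

lemma cc_succ (hb : ℝ) (k j : ℕ) : cc hb (k+1) (j+1)
    = cc hb k (j+1) + ((k - 2*j : ℕ) : ℂ) * (Complex.I/hb) * cc hb k j := rfl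

lemma cc_zero (hb : ℝ) (k : ℕ) : cc hb k 0 = 1 := by
  induction k with
  | zero => rfl
  | succ k ih => rw [show cc hb (k+1) 0 = cc hb k 0 from rfl, ih]

lemma cc_vanish (hb : ℝ) {k j : ℕ} (h : k < 2*j) : cc hb k j = 0 := by
  induction k generalizing j with
  | zero =>
      match j with
      | 0 => omega
      | j+1 => rfl
  | succ k ih =>
      match j with
      | 0 => omega
      | j+1 =>
          rw [cc_succ, ih (by omega)]
          rcases Nat.lt_or_ge k (2*j) with h2 | h2
          · rw [ih h2]; simp
          · rw [show k - 2*j = 0 by omega]; simp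

lemma cc_spec {hb : ℝ} (hhb : hb ≠ 0) (k j : ℕ) (h : 2*j ≤ k) :
    cc hb k j * ((Nat.factorial j : ℂ) * (Nat.factorial (k - 2*j) : ℂ))
      = (Complex.I/(2*hb))^j * (Nat.factorial k : ℂ) := by
  have hbC : (hb : ℂ) ≠ 0 := Complex.ofReal_ne_zero.mpr hhb
  have hI : (Complex.I / (hb:ℂ)) = 2 * (Complex.I/(2*hb)) := by
    rw [mul_div_assoc', mul_div_mul_left _ _ (two_ne_zero)]
  induction k generalizing j with
  | zero =>
      match j with
      | 0 => simp [cc]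
      | j+1 => omega
  | succ k ih =>
      match j with
      | 0 => simp [cc_zero]
      | j+1 =>
          rw [cc_succ, hI]
          rcases Nat.lt_or_ge k (2*(j+1)) with h2 | h2
          · -- k = 2j+1
            have hk : k = 2*j+1 := by omega
            subst hk
            rw [cc_vanish hb (by omega : 2*j+1 < 2*(j+1))]
            have IH0 := ih j (by omega)
            rw [show (2*j+1 - 2*j : ℕ) = 1 by omega] at IH0 ⊢
            rw [show (2*j+1+1 - 2*(j+1) : ℕ) = 0 by omega]
            rw [Nat.factorial_one] at IH0
            rw [Nat.factorial_succ (2*j+1), Nat.factorial_succ j, Nat.factorial_zero]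
            push_cast at IH0 ⊢
            linear_combination (2 * (Complex.I/(2*(hb:ℂ))) * ((j:ℂ)+1)) * IH0
          · -- 2(j+1) ≤ k
            obtain ⟨m, hm⟩ := Nat.exists_eq_add_of_le h2
            subst hm
            have IH1 := ih (j+1) (by omega)
            have IH0 := ih j (by omega)
            rw [show (2*(j+1)+m - 2*(j+1) : ℕ) = m by omega] at IH1
            rw [show (2*(j+1)+m - 2*j : ℕ) = m+2 by omega] at IH0
            rw [show (2*(j+1)+m - 2*j : ℕ) = m+2 by omega,
              show (2*(j+1)+m+1 - 2*(j+1) : ℕ) = m+1 by omega]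
            rw [Nat.factorial_succ j] at IH1
            rw [show Nat.factorial (m+2) = (m+2) * ((m+1) * Nat.factorial m) from rfl] at IH0
            rw [Nat.factorial_succ (2*(j+1)+m), Nat.factorial_succ j, Nat.factorial_succ m]
            push_cast at IH1 IH0 ⊢
            linear_combination ((m:ℂ)+1) * IH1
              + (2 * (Complex.I/(2*(hb:ℂ))) * ((j:ℂ)+1)) * IH0

end Infra6
section Infra7
open Complex Finset

variable {hb : ℝ} {H Ψ : E3 → ℂ}

lemma piop_iter (hhb : hb ≠ 0) (hH : Sm H) (hΨ : Sm Ψ) (hobs : dT H = 0)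
    (hΨT : dT Ψ = fun x => Complex.I * Ψ x) (hΨP : dP Ψ = 0) (k : ℕ) :
    (Piop hb)^[k] (tens H Ψ) = fun z => ∑ j ∈ Finset.range (k+1),
      cc hb k j * HH H j (k-j) z.1 * PP hb Ψ (k-2*j) z.2 := by
  induction k with
  | zero =>
      funext z
      simp [tens, HH, PP, cc_zero]
  | succ k ih =>
      rw [Function.iterate_succ_apply', ih]
      have hNop := Nop_sum_tens (hb := hb) (Finset.range (k+1)) (fun j => cc hb k j)
        (fun j => HH H j (k-j)) (fun j => PP hb Ψ (k-2*j))
        (fun j _ => HH_smooth hH j (k-j)) (fun j _ => PP_smooth hΨ (k-2*j))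
      have hMop := Mop_sum_tens (hb := hb) (Finset.range (k+1)) (fun j => cc hb k j)
        (fun j => HH H j (k-j)) (fun j => PP hb Ψ (k-2*j))
        (fun j _ => HH_smooth hH j (k-j)) (fun j _ => PP_smooth hΨ (k-2*j))
      funext z
      show Nop hb _ z + Mop hb _ z = _
      rw [congrFun hNop z, congrFun hMop z]
      simp only [dP_HH hH, Bop_HH hH hobs, ← PP_succ, dP_PP hhb hΨ hΨT hΨP]
      -- canonical forms
      have e2 : ∀ j, -(cc hb k j * HH H (j+1) (k-j) z.1 *
            (-((((k-2*j : ℕ)) : ℂ) * Complex.I / hb) * PP hb Ψ (k-2*j-1) z.2))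
          = (((k-2*j : ℕ) : ℂ) * (Complex.I/hb) * cc hb k j) * HH H (j+1) (k-j) z.1 *
              PP hb Ψ (k-2*j-1) z.2 := by
        intro j; ring
      rw [Finset.sum_congr rfl (fun j _ => e2 j)]
      -- RHS: peel off the j = 0 term
      conv_rhs => rw [Finset.sum_range_succ']
      have hC : ∀ j ∈ Finset.range (k+1),
          cc hb (k+1) (j+1) * HH H (j+1) (k+1-(j+1)) z.1 * PP hb Ψ (k+1-2*(j+1)) z.2
          = cc hb k (j+1) * HH H (j+1) (k-j) z.1 * PP hb Ψ (k-2*j-1) z.2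
            + (((k-2*j : ℕ) : ℂ) * (Complex.I/hb) * cc hb k j) * HH H (j+1) (k-j) z.1 *
                PP hb Ψ (k-2*j-1) z.2 := by
        intro j _
        rw [cc_succ, show k+1-(j+1) = k-j from by omega,
          show k+1-2*(j+1) = k-2*j-1 from by omega]
        ring
      rw [Finset.sum_congr rfl hC, Finset.sum_add_distrib]
      -- now match the A-sum
      have hA : ∑ j ∈ Finset.range (k+1),
            cc hb k j * HH H j (k-j+1) z.1 * PP hb Ψ (k-2*j+1) z.2
          = (∑ j ∈ Finset.range (k+1),
              cc hb k (j+1) * HH H (j+1) (k-j) z.1 * PP hb Ψ (k-2*j-1) z.2)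
            + cc hb (k+1) 0 * HH H 0 (k+1-0) z.1 * PP hb Ψ (k+1-2*0) z.2 := by
        rw [Finset.sum_range_succ' _ k]
        congr 1
        · rw [Finset.sum_range_succ _ k, cc_vanish hb (show k < 2*(k+1) by omega)]
          simp only [zero_mul, add_zero]
          refine Finset.sum_congr rfl fun j hj => ?_
          have hjk : j < k := Finset.mem_range.mp hj
          rcases Nat.lt_or_ge k (2*(j+1)) with h2 | h2
          · rw [cc_vanish hb h2]
            simp
          · rw [show k-(j+1)+1 = k-j from by omega,
              show k-2*(j+1)+1 = k-2*j-1 from by omega]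
      rw [hA]
      ring
end Infra7
section Infra8
open Complex Finset

variable {hb : ℝ} {H : E3 → ℂ}

lemma Nop_tens (hb : ℝ) (F G : E3 → ℂ) :
    Nop hb (tens F G) = fun z => dP F z.1 * Bop hb G z.2 := by
  funext z
  show dP (fun x => Bop hb (fun y => F x * G y) z.2) z.1 = _
  have step1 : (fun x => Bop hb (fun y => F x * G y) z.2)
      = fun x => F x * Bop hb G z.2 := by
    funext x; exact congrFun (Bop_const_mul hb (F x) G) z.2
  rw [step1, dP_mul_const F (Bop hb G z.2)]

lemma Nop_iter_tens (hb : ℝ) (F G : E3 → ℂ) (k : ℕ) :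
    (Nop hb)^[k] (tens F G) = tens (dP^[k] F) ((Bop hb)^[k] G) := by
  induction k with
  | zero => rfl
  | succ k ih =>
      rw [Function.iterate_succ_apply', ih, Nop_tens,
        Function.iterate_succ_apply' dP, Function.iterate_succ_apply' (Bop hb)]
      rfl

lemma dP_iter_sum (hH : Sm H) (S : ℕ) (a : ℕ → ℂ) (k : ℕ) :
    dP^[k] (fun x => ∑ j ∈ Finset.range (S+1), a j * HH H j j x)
      = fun x => ∑ j ∈ Finset.range (S+1), a j * HH H j (j+k) x := by
  induction k with
  | zero => rfl
  | succ k ih =>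
      rw [Function.iterate_succ_apply', ih,
        dP_sum (Finset.range (S+1)) (fun j => fun x => a j * HH H j (j+k) x)
          (fun j _ => contDiff_const.mul (HH_smooth hH j (j+k)))]
      funext x
      refine Finset.sum_congr rfl fun j _ => ?_
      rw [dP_const_mul (a j) (HH H j (j+k)), dP_HH hH]
      rw [show j+k+1 = j+(k+1) from by omega]

end Infra8

/-- Agarwal relation between Moyal and normal quantization:
`H •π Ψ = (exp((iħ/2)Δ)H) •ν Ψ` for `H` an observable polynomial in `(p,q)` and `Ψ`
a polarized prequantum wave function. -/
theorem agarwal_relation (hb : ℝ) (hhbar : 0 < hb)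
    (H Ψ : ℝ × ℝ × ℝ → ℂ) (hH : ContDiff ℝ (⊤ : ℕ∞) H) (hΨ : ContDiff ℝ (⊤ : ℕ∞) Ψ)
    (hHobs : dT H = 0)
    (hHpoly : ∃ N : ℕ, ∀ a b : ℕ, N < a + b → dP^[a] (dQ^[b] H) = 0)
    (hΨeq : dT Ψ = fun x => Complex.I * Ψ x) (hΨpol : dP Ψ = 0)
    (H' : ℝ × ℝ × ℝ → ℂ)
    (hH' : H' = fun x => ∑' j : ℕ,
      (Complex.I * (hb : ℂ) / 2) ^ j / (Nat.factorial j : ℂ) * Yano^[j] H x) :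
    ∀ x : ℝ × ℝ × ℝ,
      (∑' k : ℕ, ((hb : ℂ) / Complex.I) ^ k / (Nat.factorial k : ℂ) *
          (Piop hb)^[k] (tens H Ψ) (x, x)) =
      (∑' k : ℕ, ((hb : ℂ) / Complex.I) ^ k / (Nat.factorial k : ℂ) *
          (Nop hb)^[k] (tens H' Ψ) (x, x)) := by
  intro x
  have hhb : hb ≠ 0 := ne_of_gt hhbar
  have hbC : (hb : ℂ) ≠ 0 := Complex.ofReal_ne_zero.mpr hhb
  have hHs : Sm H := hH.of_le (by simp)
  have hΨs : Sm Ψ := hΨ.of_le (by simp)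
  obtain ⟨S, hS⟩ := hHpoly
  set lam : ℂ := (hb : ℂ) / Complex.I with hlam
  set a : ℕ → ℂ := fun j => (-(Complex.I * (hb:ℂ) / 2))^j / (Nat.factorial j : ℂ) with ha
  -- H' is a finite sum
  have hH'sum : H' = fun y => ∑ j ∈ Finset.range (S+1), a j * HH H j j y := by
    rw [hH']
    funext y
    have hvan : ∀ j ∉ Finset.range (S+1),
        (Complex.I * (hb:ℂ)/2)^j / (Nat.factorial j : ℂ) * Yano^[j] H y = 0 := by
      intro j hj
      have hjS : S < j := by simpa [Finset.mem_range] using hj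
      simp [Yano_iter hHs, HH_vanish hHs hS j j (by omega)]
    rw [tsum_eq_sum hvan]
    refine Finset.sum_congr rfl fun j _ => ?_
    simp only [Yano_iter hHs, ha]
    rw [show (-(Complex.I * (hb:ℂ)/2))^j = (-1:ℂ)^j * (Complex.I*(hb:ℂ)/2)^j from by
      rw [← neg_one_mul, mul_pow]]
    ring
  rw [hH'sum]
  -- LHS summand vanishing
  have hLv : ∀ k ∉ Finset.range (S+1),
      lam ^ k / (Nat.factorial k : ℂ) * (Piop hb)^[k] (tens H Ψ) (x, x) = 0 := by
    intro k hk
    have hkS : S < k := by simpa [Finset.mem_range] using hk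
    simp only [piop_iter hhb hHs hΨs hHobs hΨeq hΨpol k]
    rw [Finset.sum_eq_zero (fun j hj => by
      rw [HH_vanish hHs hS j (k-j) (by
        have := Finset.mem_range.mp hj; omega)]
      simp)]
    simp
  -- RHS evaluation
  have hNk : ∀ k : ℕ, (Nop hb)^[k] (tens (fun y => ∑ j ∈ Finset.range (S+1), a j * HH H j j y) Ψ) (x, x)
      = (∑ j ∈ Finset.range (S+1), a j * HH H j (j+k) x) * PP hb Ψ k x := by
    intro k
    rw [Nop_iter_tens hb _ Ψ k, dP_iter_sum hHs S a k]
    rfl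
  have hRv : ∀ k ∉ Finset.range (S+1),
      lam ^ k / (Nat.factorial k : ℂ) *
        (Nop hb)^[k] (tens (fun y => ∑ j ∈ Finset.range (S+1), a j * HH H j j y) Ψ) (x, x) = 0 := by
    intro k hk
    have hkS : S < k := by simpa [Finset.mem_range] using hk
    rw [hNk k, Finset.sum_eq_zero (fun j hj => by
      rw [HH_vanish hHs hS j (j+k) (by omega)]
      simp)]
    simp
  rw [tsum_eq_sum hLv, tsum_eq_sum hRv]
  -- the key per-column identity
  have key : ∀ j ∈ Finset.range (S+1),
      (∑ k ∈ Finset.range (S+1),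
          lam ^ k / (Nat.factorial k : ℂ) * (cc hb k j * HH H j (k-j) x * PP hb Ψ (k-2*j) x))
      = ∑ n ∈ Finset.range (S+1),
          lam ^ n / (Nat.factorial n : ℂ) * (a j * HH H j (j+n) x) * PP hb Ψ n x := by
    intro j _
    rcases Nat.lt_or_ge S (2*j) with hj2 | hj2
    · rw [Finset.sum_eq_zero (fun k hk => by
        rw [cc_vanish hb (show k < 2*j from by
          have := Finset.mem_range.mp hk; omega)]
        ring)]
      rw [Finset.sum_eq_zero (fun n hn => by
        rw [HH_vanish hHs hS j (j+n) (by omega)]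
        simp)]
    · -- 2j ≤ S
      rw [Finset.range_eq_Ico,
        ← Finset.sum_Ico_consecutive _ (Nat.zero_le (2*j)) (show 2*j ≤ S+1 by omega)]
      rw [Finset.sum_eq_zero (fun k hk => by
        rw [cc_vanish hb (show k < 2*j from (Finset.mem_Ico.mp hk).2)]
        ring)]
      rw [zero_add, Finset.sum_Ico_eq_sum_range]
      rw [← Finset.range_eq_Ico]
      rw [← Finset.sum_subset (Finset.range_subset_range.mpr (show S+1-2*j ≤ S+1 by omega))
        (fun n _ hn => by
          rw [HH_vanish hHs hS j (j+n) (by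
            have : S+1-2*j ≤ n := by simpa [Finset.mem_range] using hn
            omega)]
          simp)]
      refine Finset.sum_congr rfl fun i hi => ?_
      rw [show 2*j+i-j = j+i from by omega, show 2*j+i-2*j = i from by omega]
      have hcc : cc hb (2*j+i) j
          = (Complex.I/(2*hb))^j * ((Nat.factorial (2*j+i) : ℕ) : ℂ) /
              ((Nat.factorial j : ℂ) * (Nat.factorial i : ℂ)) := by
        rw [eq_div_iff (mul_ne_zero (fact_ne_zero j) (fact_ne_zero i))]
        have h := cc_spec hhb (2*j+i) j (by omega)
        rwa [show 2*j+i-2*j = i from by omega] at h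
      rw [hcc]
      have hmu : (-(Complex.I * (hb:ℂ) / 2)) = lam^2 * (Complex.I/(2*hb)) := by
        rw [hlam, div_pow, Complex.I_sq]
        field_simp
      have hlampow : lam^(2*j+i) = (lam^2)^j * lam^i := by
        rw [← pow_mul, ← pow_add]
      simp only [ha, hmu, mul_pow, hlampow]
      field_simp [fact_ne_zero (2*j+i), fact_ne_zero j, fact_ne_zero i]
  calc (∑ k ∈ Finset.range (S+1),
          lam ^ k / (Nat.factorial k : ℂ) * (Piop hb)^[k] (tens H Ψ) (x, x))
      = ∑ k ∈ Finset.range (S+1), ∑ j ∈ Finset.range (S+1),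
          lam ^ k / (Nat.factorial k : ℂ) *
            (cc hb k j * HH H j (k-j) x * PP hb Ψ (k-2*j) x) := by
        refine Finset.sum_congr rfl fun k hk => ?_
        simp only [piop_iter hhb hHs hΨs hHobs hΨeq hΨpol k]
        rw [Finset.sum_subset (Finset.range_subset_range.mpr
            (show k+1 ≤ S+1 from by have := Finset.mem_range.mp hk; omega))
          (fun j _ hj => by
            rw [cc_vanish hb (show k < 2*j from by
              have : k+1 ≤ j := by simpa [Finset.mem_range] using hj
              omega)]
            ring)]
        rw [Finset.mul_sum]
    _ = ∑ j ∈ Finset.range (S+1), ∑ k ∈ Finset.range (S+1),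
          lam ^ k / (Nat.factorial k : ℂ) *
            (cc hb k j * HH H j (k-j) x * PP hb Ψ (k-2*j) x) := Finset.sum_comm
    _ = ∑ j ∈ Finset.range (S+1), ∑ n ∈ Finset.range (S+1),
          lam ^ n / (Nat.factorial n : ℂ) * (a j * HH H j (j+n) x) * PP hb Ψ n x :=
        Finset.sum_congr rfl key
    _ = ∑ n ∈ Finset.range (S+1), ∑ j ∈ Finset.range (S+1),
          lam ^ n / (Nat.factorial n : ℂ) * (a j * HH H j (j+n) x) * PP hb Ψ n x :=
        Finset.sum_comm
    _ = ∑ k ∈ Finset.range (S+1), lam ^ k / (Nat.factorial k : ℂ) *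
          (Nop hb)^[k] (tens (fun y => ∑ j ∈ Finset.range (S+1), a j * HH H j j y) Ψ) (x, x) := by
        refine Finset.sum_congr rfl fun n _ => ?_
        rw [hNk n, Finset.sum_mul, Finset.mul_sum]
        refine Finset.sum_congr rfl fun j _ => ?_
        ring
end

section
/- (Corollary: the Moyal quantum product preserves the polarization.) Let H : ℝ³ → ℂ be smooth with ∂_θ H = 0 and polynomial in (p,q) (all iterated derivatives in p and q of sufficiently high total order vanish identically), and let Ψ : ℝ³ → ℂ be a polarized prequantum wave function (∂_θ Ψ = iΨ, ∂_p Ψ = 0). Then the Moyal quantum product H •π Ψ, defined by (H •π Ψ)(x) = Σ_{k≥0} (ħ/i)^k (1/k!) (Π^k (H ⊗ Ψ))(x,x) (a finite sum), satisfies ∂_p(H •π Ψ) = 0 and ∂_θ(H •π Ψ) = i(H •π Ψ); that is, H •π Ψ is again a polarized prequantum wave function. -/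
open Complex

/-- The Moyal quantum product `(H •π Ψ)(x) = Σ_k (ħ/i)^k (1/k!) (Π^k (H ⊗ Ψ))(x,x)`. -/
noncomputable def moyalProd (hb : ℝ) (H Ψ : ℝ × ℝ × ℝ → ℂ) : ℝ × ℝ × ℝ → ℂ :=
  fun x => ∑' k : ℕ, ((hb : ℂ) / Complex.I) ^ k / (Nat.factorial k : ℂ) *
    (Piop hb)^[k] (tens H Ψ) (x, x)


namespace MoyalAux
abbrev R3 := ℝ × ℝ × ℝ
noncomputable def e1 : R3 := (1,0,0)
noncomputable def e2 : R3 := (0,1,0)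
noncomputable def e3 : R3 := (0,0,1)

theorem hasDerivAt_P (f : R3 → ℂ) (hf : Differentiable ℝ f) (x : R3) :
    HasDerivAt (fun s => f (s, x.2.1, x.2.2)) (fderiv ℝ f x e1) x.1 := by
  have h1 : HasDerivAt (fun s : ℝ => ((s, x.2.1, x.2.2) : R3)) e1 x.1 :=
    (hasDerivAt_id x.1).prodMk ((hasDerivAt_const _ _).prodMk (hasDerivAt_const _ _))
  have h2 := (hf (x.1, x.2.1, x.2.2)).hasFDerivAt
  exact h2.comp_hasDerivAt x.1 h1

theorem hasDerivAt_Q (f : R3 → ℂ) (hf : Differentiable ℝ f) (x : R3) :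
    HasDerivAt (fun s => f (x.1, s, x.2.2)) (fderiv ℝ f x e2) x.2.1 := by
  have h1 : HasDerivAt (fun s : ℝ => ((x.1, s, x.2.2) : R3)) e2 x.2.1 :=
    (hasDerivAt_const _ _).prodMk ((hasDerivAt_id _).prodMk (hasDerivAt_const _ _))
  have h2 := (hf (x.1, x.2.1, x.2.2)).hasFDerivAt
  exact h2.comp_hasDerivAt x.2.1 h1

theorem hasDerivAt_T (f : R3 → ℂ) (hf : Differentiable ℝ f) (x : R3) :
    HasDerivAt (fun s => f (x.1, x.2.1, s)) (fderiv ℝ f x e3) x.2.2 := by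
  have h1 : HasDerivAt (fun s : ℝ => ((x.1, x.2.1, s) : R3)) e3 x.2.2 :=
    (hasDerivAt_const _ _).prodMk ((hasDerivAt_const _ _).prodMk (hasDerivAt_id _))
  have h2 := (hf (x.1, x.2.1, x.2.2)).hasFDerivAt
  exact h2.comp_hasDerivAt x.2.2 h1

theorem dP_eq (f : R3 → ℂ) (hf : Differentiable ℝ f) : dP f = fun x => fderiv ℝ f x e1 :=
  funext fun x => (hasDerivAt_P f hf x).deriv
theorem dQ_eq (f : R3 → ℂ) (hf : Differentiable ℝ f) : dQ f = fun x => fderiv ℝ f x e2 :=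
  funext fun x => (hasDerivAt_Q f hf x).deriv
theorem dT_eq (f : R3 → ℂ) (hf : Differentiable ℝ f) : dT f = fun x => fderiv ℝ f x e3 :=
  funext fun x => (hasDerivAt_T f hf x).deriv

theorem hdP (f : R3 → ℂ) (hf : Differentiable ℝ f) (x : R3) :
    HasDerivAt (fun s => f (s, x.2.1, x.2.2)) (dP f x) x.1 := by
  rw [dP_eq f hf]; exact hasDerivAt_P f hf x
theorem hdQ (f : R3 → ℂ) (hf : Differentiable ℝ f) (x : R3) :
    HasDerivAt (fun s => f (x.1, s, x.2.2)) (dQ f x) x.2.1 := by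
  rw [dQ_eq f hf]; exact hasDerivAt_Q f hf x
theorem hdT (f : R3 → ℂ) (hf : Differentiable ℝ f) (x : R3) :
    HasDerivAt (fun s => f (x.1, x.2.1, s)) (dT f x) x.2.2 := by
  rw [dT_eq f hf]; exact hasDerivAt_T f hf x

theorem contDiff_dP (f : R3 → ℂ) (hf : ContDiff ℝ (⊤ : ℕ∞) f) : ContDiff ℝ (⊤ : ℕ∞) (dP f) := by
  rw [dP_eq f (hf.differentiable (by simp))]
  exact (hf.fderiv_right (by simp)).clm_apply contDiff_const
theorem contDiff_dQ (f : R3 → ℂ) (hf : ContDiff ℝ (⊤ : ℕ∞) f) : ContDiff ℝ (⊤ : ℕ∞) (dQ f) := by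
  rw [dQ_eq f (hf.differentiable (by simp))]
  exact (hf.fderiv_right (by simp)).clm_apply contDiff_const
theorem contDiff_dT (f : R3 → ℂ) (hf : ContDiff ℝ (⊤ : ℕ∞) f) : ContDiff ℝ (⊤ : ℕ∞) (dT f) := by
  rw [dT_eq f (hf.differentiable (by simp))]
  exact (hf.fderiv_right (by simp)).clm_apply contDiff_const

theorem schwarz (f : R3 → ℂ) (hf : ContDiff ℝ (⊤ : ℕ∞) f) (v w : R3) (x : R3) :
    fderiv ℝ (fun y => fderiv ℝ f y v) x w = fderiv ℝ (fun y => fderiv ℝ f y w) x v := by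
  have hsym := (hf.contDiffAt (x := x)).isSymmSndFDerivAt (by rw [minSmoothness_of_isRCLikeNormedField]; exact WithTop.coe_le_coe.mpr le_top)
  have hd : DifferentiableAt ℝ (fderiv ℝ f) x :=
    ((hf.fderiv_right (m := (⊤ : ℕ∞)) (by simp)).differentiable (by simp)).differentiableAt
  have h1 : ∀ v w : R3, fderiv ℝ (fun y => fderiv ℝ f y v) x w
      = fderiv ℝ (fderiv ℝ f) x w v := by
    intro v w
    rw [fderiv_clm_apply hd (differentiableAt_const v)]
    simp
  rw [h1, h1, hsym]

theorem Diff (f : R3 → ℂ) (hf : ContDiff ℝ (⊤ : ℕ∞) f) : Differentiable ℝ f := hf.differentiable (by simp)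

theorem comm_gen (f : R3 → ℂ) (hf : ContDiff ℝ (⊤ : ℕ∞) f)
    (dA dB : (R3 → ℂ) → R3 → ℂ) (va vb : R3)
    (hA : ∀ g : R3 → ℂ, Differentiable ℝ g → dA g = fun x => fderiv ℝ g x va)
    (hB : ∀ g : R3 → ℂ, Differentiable ℝ g → dB g = fun x => fderiv ℝ g x vb) :
    dA (dB f) = dB (dA f) := by
  have hdf : Differentiable ℝ f := Diff f hf
  have h1 : Differentiable ℝ fun x => fderiv ℝ f x vb :=
    Diff _ (((hf.fderiv_right (by simp)).clm_apply contDiff_const))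
  have h2 : Differentiable ℝ fun x => fderiv ℝ f x va :=
    Diff _ (((hf.fderiv_right (by simp)).clm_apply contDiff_const))
  rw [hB f hdf, hA f hdf, hA _ h1, hB _ h2]
  funext x
  exact schwarz f hf vb va x

theorem dP_dQ (f : R3 → ℂ) (hf : ContDiff ℝ (⊤ : ℕ∞) f) : dP (dQ f) = dQ (dP f) :=
  comm_gen f hf dP dQ e1 e2 (fun g hg => dP_eq g hg) (fun g hg => dQ_eq g hg)
theorem dP_dT (f : R3 → ℂ) (hf : ContDiff ℝ (⊤ : ℕ∞) f) : dP (dT f) = dT (dP f) :=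
  comm_gen f hf dP dT e1 e3 (fun g hg => dP_eq g hg) (fun g hg => dT_eq g hg)
theorem dQ_dT (f : R3 → ℂ) (hf : ContDiff ℝ (⊤ : ℕ∞) f) : dQ (dT f) = dT (dQ f) :=
  comm_gen f hf dQ dT e2 e3 (fun g hg => dQ_eq g hg) (fun g hg => dT_eq g hg)

theorem contDiff_Bop (hb : ℝ) (f : R3 → ℂ) (hf : ContDiff ℝ (⊤ : ℕ∞) f) :
    ContDiff ℝ (⊤ : ℕ∞) (Bop hb f) := by
  unfold Bop
  apply ContDiff.sub (contDiff_dQ f hf)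
  have : ContDiff ℝ (⊤ : WithTop ℕ∞) (fun x : R3 => ((x.1/hb : ℝ) : ℂ)) :=
    Complex.ofRealCLM.contDiff.comp (contDiff_fst.div_const _)
  exact (this.of_le le_top).mul (contDiff_dT f hf)

section Dir
variable {ι : Type*} (dX : (R3 → ℂ) → R3 → ℂ) (κ : R3 → ℝ → R3) (pr : R3 → ℝ)
variable (hXd : ∀ (f : R3 → ℂ) (x : R3), dX f x = deriv (fun s => f (κ x s)) (pr x))
variable (hdX : ∀ (g : R3 → ℂ), Differentiable ℝ g → ∀ x, HasDerivAt (fun s => g (κ x s)) (dX g x) (pr x))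
variable (hκ : ∀ x, κ x (pr x) = x)

include hXd hdX in
theorem gen_sum (s : Finset ι) (g : ι → ℂ) (F : ι → R3 → ℂ)
    (hF : ∀ i ∈ s, Differentiable ℝ (F i)) :
    dX (fun x => ∑ i ∈ s, g i * F i x) = fun x => ∑ i ∈ s, g i * dX (F i) x := by
  funext x
  rw [hXd]
  exact (HasDerivAt.fun_sum (fun i hi => ((hdX (F i) (hF i hi) x).const_mul (g i)))).deriv

include hXd hdX hκ in
theorem gen_sum_mul (s : Finset ι) (g : ι → ℂ) (F G : ι → R3 → ℂ)
    (hF : ∀ i ∈ s, Differentiable ℝ (F i)) (hG : ∀ i ∈ s, Differentiable ℝ (G i)) :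
    dX (fun x => ∑ i ∈ s, g i * (F i x * G i x)) =
      fun x => ∑ i ∈ s, g i * (dX (F i) x * G i x + F i x * dX (G i) x) := by
  funext x
  rw [hXd]
  have := (HasDerivAt.fun_sum (fun i hi =>
    (((hdX (F i) (hF i hi) x).mul (hdX (G i) (hG i hi) x)).const_mul (g i)))).deriv
  rw [hκ x] at this
  exact this

include hXd hdX in
theorem gen_const_mul (c : ℂ) (f : R3 → ℂ) (hf : Differentiable ℝ f) :
    dX (fun x => c * f x) = fun x => c * dX f x := by
  funext x
  rw [hXd]
  exact ((hdX f hf x).const_mul c).deriv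

include hXd hdX in
theorem gen_sub (f g : R3 → ℂ) (hf : Differentiable ℝ f) (hg : Differentiable ℝ g) :
    dX (fun x => f x - g x) = fun x => dX f x - dX g x := by
  funext x
  rw [hXd]
  exact ((hdX f hf x).sub (hdX g hg x)).deriv
end Dir

theorem pXd : ∀ (f : R3 → ℂ) (x : R3), dP f x = deriv (fun s => f (s, x.2.1, x.2.2)) x.1 :=
  fun _ _ => rfl
theorem qXd : ∀ (f : R3 → ℂ) (x : R3), dQ f x = deriv (fun s => f (x.1, s, x.2.2)) x.2.1 :=
  fun _ _ => rfl
theorem tXd : ∀ (f : R3 → ℂ) (x : R3), dT f x = deriv (fun s => f (x.1, x.2.1, s)) x.2.2 :=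
  fun _ _ => rfl

theorem dP_sum {ι : Type*} (s : Finset ι) (g : ι → ℂ) (F : ι → R3 → ℂ)
    (hF : ∀ i ∈ s, Differentiable ℝ (F i)) :
    dP (fun x => ∑ i ∈ s, g i * F i x) = fun x => ∑ i ∈ s, g i * dP (F i) x :=
  gen_sum dP _ _ pXd hdP s g F hF
theorem dQ_sum {ι : Type*} (s : Finset ι) (g : ι → ℂ) (F : ι → R3 → ℂ)
    (hF : ∀ i ∈ s, Differentiable ℝ (F i)) :
    dQ (fun x => ∑ i ∈ s, g i * F i x) = fun x => ∑ i ∈ s, g i * dQ (F i) x :=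
  gen_sum dQ _ _ qXd hdQ s g F hF
theorem dT_sum {ι : Type*} (s : Finset ι) (g : ι → ℂ) (F : ι → R3 → ℂ)
    (hF : ∀ i ∈ s, Differentiable ℝ (F i)) :
    dT (fun x => ∑ i ∈ s, g i * F i x) = fun x => ∑ i ∈ s, g i * dT (F i) x :=
  gen_sum dT _ _ tXd hdT s g F hF
theorem dP_sum_mul {ι : Type*} (s : Finset ι) (g : ι → ℂ) (F G : ι → R3 → ℂ)
    (hF : ∀ i ∈ s, Differentiable ℝ (F i)) (hG : ∀ i ∈ s, Differentiable ℝ (G i)) :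
    dP (fun x => ∑ i ∈ s, g i * (F i x * G i x)) =
      fun x => ∑ i ∈ s, g i * (dP (F i) x * G i x + F i x * dP (G i) x) :=
  gen_sum_mul dP _ _ pXd hdP (fun x => rfl) s g F G hF hG
theorem dT_sum_mul {ι : Type*} (s : Finset ι) (g : ι → ℂ) (F G : ι → R3 → ℂ)
    (hF : ∀ i ∈ s, Differentiable ℝ (F i)) (hG : ∀ i ∈ s, Differentiable ℝ (G i)) :
    dT (fun x => ∑ i ∈ s, g i * (F i x * G i x)) =
      fun x => ∑ i ∈ s, g i * (dT (F i) x * G i x + F i x * dT (G i) x) :=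
  gen_sum_mul dT _ _ tXd hdT (fun x => rfl) s g F G hF hG
theorem dQ_const_mul (c : ℂ) (f : R3 → ℂ) (hf : Differentiable ℝ f) :
    dQ (fun x => c * f x) = fun x => c * dQ f x := gen_const_mul dQ _ _ qXd hdQ c f hf
theorem dT_const_mul (c : ℂ) (f : R3 → ℂ) (hf : Differentiable ℝ f) :
    dT (fun x => c * f x) = fun x => c * dT f x := gen_const_mul dT _ _ tXd hdT c f hf

-- coefficient rules
theorem dT_coeff_mul (hb : ℝ) (g : R3 → ℂ) (hg : Differentiable ℝ g) :
    dT (fun x => ((x.1 / hb : ℝ) : ℂ) * g x) = fun x => ((x.1 / hb : ℝ) : ℂ) * dT g x := by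
  funext x
  exact ((hdT g hg x).const_mul (((x.1 / hb : ℝ) : ℂ))).deriv
theorem dP_coeff_mul (hb : ℝ) (g : R3 → ℂ) (hg : Differentiable ℝ g) :
    dP (fun x => ((x.1 / hb : ℝ) : ℂ) * g x) =
      fun x => ((1 / hb : ℝ) : ℂ) * g x + ((x.1 / hb : ℝ) : ℂ) * dP g x := by
  funext x
  have hc : HasDerivAt (fun s : ℝ => ((s / hb : ℝ) : ℂ)) ((1 / hb : ℝ) : ℂ) x.1 := by
    have h0 : HasDerivAt (fun s : ℝ => s / hb) (1 / hb) x.1 := (hasDerivAt_id x.1).div_const hb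
    exact Complex.ofRealCLM.hasFDerivAt.comp_hasDerivAt x.1 h0
  exact (hc.mul (hdP g hg x)).deriv

theorem dT_Bop (hb : ℝ) (g : R3 → ℂ) (hg : ContDiff ℝ (⊤ : ℕ∞) g) :
    dT (Bop hb g) = Bop hb (dT g) := by
  have h1 : dT (Bop hb g) = dT (fun x => dQ g x - ((x.1/hb : ℝ):ℂ) * dT g x) := rfl
  have hcoeff : Differentiable ℝ (fun x : R3 => ((x.1 / hb : ℝ) : ℂ) * dT g x) :=
    ((Complex.ofRealCLM.contDiff.comp (contDiff_fst.div_const _)).mul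
        (contDiff_dT g hg)).differentiable (by simp)
  rw [h1, gen_sub dT _ _ tXd hdT _ _ (Diff _ (contDiff_dQ g hg)) hcoeff,
    dT_coeff_mul hb _ (Diff _ (contDiff_dT g hg)), ← dQ_dT g hg]
  rfl

theorem dP_Bop (hb : ℝ) (g : R3 → ℂ) (hg : ContDiff ℝ (⊤ : ℕ∞) g) :
    dP (Bop hb g) = fun x => Bop hb (dP g) x - ((1/hb : ℝ):ℂ) * dT g x := by
  have h1 : dP (Bop hb g) = dP (fun x => dQ g x - ((x.1/hb : ℝ):ℂ) * dT g x) := rfl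
  have hcoeff : Differentiable ℝ (fun x : R3 => ((x.1 / hb : ℝ) : ℂ) * dT g x) :=
    ((Complex.ofRealCLM.contDiff.comp (contDiff_fst.div_const _)).mul
        (contDiff_dT g hg)).differentiable (by simp)
  rw [h1, gen_sub dP _ _ pXd hdP _ _ (Diff _ (contDiff_dQ g hg)) hcoeff,
    dP_coeff_mul hb _ (Diff _ (contDiff_dT g hg)), dP_dQ g hg, dP_dT g hg]
  funext x
  simp [Bop]
  ring

theorem Bop_sum {ι : Type*} (hb : ℝ) (s : Finset ι) (g : ι → ℂ) (F : ι → R3 → ℂ)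
    (hF : ∀ i ∈ s, Differentiable ℝ (F i)) :
    Bop hb (fun x => ∑ i ∈ s, g i * F i x) = fun x => ∑ i ∈ s, g i * Bop hb (F i) x := by
  funext x
  simp only [Bop, dQ_sum s g F hF, dT_sum s g F hF, Finset.mul_sum, ← Finset.sum_sub_distrib]
  exact Finset.sum_congr rfl fun i _ => by ring

theorem Bop_const_mul (hb : ℝ) (c : ℂ) (f : R3 → ℂ) (hf : Differentiable ℝ f) :
    Bop hb (fun x => c * f x) = fun x => c * Bop hb f x := by
  funext x
  simp only [Bop, dQ_const_mul c f hf, dT_const_mul c f hf]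
  ring

theorem dP_zero : dP (fun _ : R3 => (0:ℂ)) = fun _ => 0 := by
  funext x; simp [dP]
theorem dQ_zero : dQ (fun _ : R3 => (0:ℂ)) = fun _ => 0 := by
  funext x; simp [dQ]
theorem Bop_zero (hb : ℝ) : Bop hb (fun _ : R3 => (0:ℂ)) = fun _ => 0 := by
  funext x; simp [Bop, dQ, dT]

section Main
variable (hb : ℝ) (H Ψ : R3 → ℂ) (hH : ContDiff ℝ (⊤ : ℕ∞) H) (hΨ : ContDiff ℝ (⊤ : ℕ∞) Ψ)
  (hHobs : dT H = 0) (hΨeq : dT Ψ = fun x => Complex.I * Ψ x) (hΨpol : dP Ψ = 0)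

noncomputable def Hab (a b : ℕ) : R3 → ℂ := dP^[a] (dQ^[b] (H))
noncomputable def Psi (j : ℕ) : R3 → ℂ := (Bop hb)^[j] Ψ

include hH in
theorem contDiff_dQiter (b : ℕ) : ContDiff ℝ (⊤ : ℕ∞) (dQ^[b] H) := by
  induction b with
  | zero => exact hH
  | succ b ih => rw [Function.iterate_succ_apply']; exact contDiff_dQ _ ih

include hH in
theorem contDiff_Hab (a b : ℕ) : ContDiff ℝ (⊤ : ℕ∞) (Hab H a b) := by
  induction a with
  | zero => exact contDiff_dQiter H hH b
  | succ a ih => rw [Hab, Function.iterate_succ_apply']; exact contDiff_dP _ ih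

include hΨ in
theorem contDiff_Psi (j : ℕ) : ContDiff ℝ (⊤ : ℕ∞) (Psi hb Ψ j) := by
  induction j with
  | zero => exact hΨ
  | succ j ih => rw [Psi, Function.iterate_succ_apply']; exact contDiff_Bop _ _ ih

include hH hHobs in
theorem dT_dQiter (b : ℕ) : dT (dQ^[b] H) = fun _ => 0 := by
  induction b with
  | zero => rw [show dQ^[0] H = H from rfl, hHobs]; rfl
  | succ b ih =>
      rw [Function.iterate_succ_apply', ← dQ_dT _ (contDiff_dQiter H hH b), ih]
      exact dQ_zero

include hH hHobs in
theorem dT_Hab (a b : ℕ) : dT (Hab H a b) = fun _ => 0 := by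
  induction a with
  | zero => exact dT_dQiter H hH hHobs b
  | succ a ih =>
      rw [Hab, Function.iterate_succ_apply',
        show dP^[a] (dQ^[b] H) = Hab H a b from rfl,
        ← dP_dT _ (contDiff_Hab H hH a b), ih]
      exact dP_zero

theorem dP_Hab (a b : ℕ) : dP (Hab H a b) = Hab H (a+1) b := by
  rw [Hab, Hab, Function.iterate_succ_apply']

include hH in
theorem dQ_Hab (a b : ℕ) : dQ (Hab H a b) = Hab H a (b+1) := by
  induction a with
  | zero => rw [Hab, Hab]; simp [Function.iterate_succ_apply']
  | succ a ih =>
      rw [Hab, Function.iterate_succ_apply',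
        show dP^[a] (dQ^[b] H) = Hab H a b from rfl,
        ← dP_dQ _ (contDiff_Hab H hH a b), ih, dP_Hab]

include hH hHobs in
theorem Bop_Hab (a b : ℕ) : Bop hb (Hab H a b) = Hab H a (b+1) := by
  funext x
  rw [Bop, dQ_Hab H hH a b, dT_Hab H hH hHobs a b]
  simp

theorem Bop_Psi (j : ℕ) : Bop hb (Psi hb Ψ j) = Psi hb Ψ (j+1) := by
  rw [Psi, Psi, Function.iterate_succ_apply']

include hΨ hΨeq in
theorem dT_Psi (j : ℕ) : dT (Psi hb Ψ j) = fun x => Complex.I * Psi hb Ψ j x := by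
  induction j with
  | zero => exact hΨeq
  | succ j ih =>
      rw [← Bop_Psi, dT_Bop hb _ (contDiff_Psi hb Ψ hΨ j), ih,
        Bop_const_mul hb _ _ (Diff _ (contDiff_Psi hb Ψ hΨ j)), Bop_Psi]

include hΨ hΨeq hΨpol in
theorem dP_Psi_succ (j : ℕ) :
    dP (Psi hb Ψ (j+1)) = fun x => -(Complex.I * (j+1) / hb) * Psi hb Ψ j x := by
  induction j with
  | zero =>
      rw [show Psi hb Ψ (0+1) = Bop hb Ψ from rfl, dP_Bop hb Ψ hΨ, hΨpol, hΨeq,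
        show Psi hb Ψ 0 = Ψ from rfl, show (0:R3 → ℂ) = (fun _ => 0) from rfl, Bop_zero]
      funext x
      push_cast
      ring
  | succ j ih =>
      rw [← Bop_Psi, dP_Bop hb _ (contDiff_Psi hb Ψ hΨ (j+1)), ih,
        Bop_const_mul hb _ _ (Diff _ (contDiff_Psi hb Ψ hΨ j)), Bop_Psi,
        dT_Psi hb Ψ hΨ hΨeq (j+1)]
      funext x
      push_cast
      ring

include hΨ hΨeq hΨpol in
theorem dP_Psi (j : ℕ) :
    dP (Psi hb Ψ j) = fun x => -(Complex.I * (j:ℂ) / hb) * Psi hb Ψ (j-1) x := by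
  cases j with
  | zero => rw [show Psi hb Ψ 0 = Ψ from rfl, hΨpol]; funext x; simp
  | succ j => rw [dP_Psi_succ hb Ψ hΨ hΨeq hΨpol j]; push_cast; rfl

end Main

noncomputable def gam (hb : ℝ) (k b : ℕ) : ℂ :=
  (Complex.I / hb) ^ b * (Nat.descFactorial k (2*b) : ℂ) / ((2^b * Nat.factorial b : ℕ) : ℂ)

theorem gam_zero (hb : ℝ) {k b : ℕ} (h : k < 2*b) : gam hb k b = 0 := by
  simp [gam, Nat.descFactorial_eq_zero_iff_lt.mpr h]

theorem gam_k0 (hb : ℝ) (k : ℕ) : gam hb k 0 = 1 := by simp [gam]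

theorem descID (k b : ℕ) : Nat.descFactorial (k+1) (2*b+2) =
    Nat.descFactorial k (2*b+2) + (k - 2*b) * (2*(b+1)) * Nat.descFactorial k (2*b) := by
  rcases lt_or_ge k (2*b) with h | h
  · rw [Nat.descFactorial_eq_zero_iff_lt.mpr (by omega),
      Nat.descFactorial_eq_zero_iff_lt.mpr (by omega),
      Nat.descFactorial_eq_zero_iff_lt.mpr h]
    simp
  rcases Nat.eq_or_lt_of_le h with h' | h'
  · rw [Nat.descFactorial_eq_zero_iff_lt.mpr (by omega : k+1 < 2*b+2),
      Nat.descFactorial_eq_zero_iff_lt.mpr (by omega : k < 2*b+2),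
      show k - 2*b = 0 from by omega]
    simp
  obtain ⟨m, rfl⟩ : ∃ m, k = 2*b + 1 + m := ⟨k - (2*b+1), by omega⟩
  have e1 : Nat.descFactorial (2*b+1+m+1) (2*b+2)
      = (2*b+1+m+1) * ((m+1) * Nat.descFactorial (2*b+1+m) (2*b)) := by
    rw [show (2*b+2) = (2*b+1)+1 from rfl, Nat.succ_descFactorial_succ,
      Nat.descFactorial_succ, show 2*b+1+m - 2*b = m+1 from by omega]
  have e2 : Nat.descFactorial (2*b+1+m) (2*b+2)
      = m * ((m+1) * Nat.descFactorial (2*b+1+m) (2*b)) := by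
    rw [show (2*b+2) = (2*b+1)+1 from rfl, Nat.descFactorial_succ, Nat.descFactorial_succ]
    rw [show 2*b+1+m - (2*b+1) = m from by omega, show 2*b+1+m - 2*b = m+1 from by omega]
  rw [e1, e2]
  have h3 : 2*b+1+m - 2*b = m+1 := by omega
  rw [h3]
  ring

theorem gam_rec (hb : ℝ) (hhb : hb ≠ 0) (k b : ℕ) :
    gam hb (k+1) (b+1) = gam hb k (b+1)
      + (Complex.I / hb) * ((k - 2*b : ℕ) : ℂ) * gam hb k b := by
  have hhb' : ((hb : ℂ)) ≠ 0 := Complex.ofReal_ne_zero.mpr hhb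
  have hfac : ((Nat.factorial b : ℕ) : ℂ) ≠ 0 :=
    Nat.cast_ne_zero.mpr (Nat.factorial_ne_zero b)
  have hb1 : ((b : ℂ) + 1) ≠ 0 := by
    have : ((b+1 : ℕ) : ℂ) ≠ 0 := Nat.cast_ne_zero.mpr (Nat.succ_ne_zero b)
    push_cast at this
    exact this
  have hdesc : ((Nat.descFactorial (k+1) (2*b+2) : ℕ) : ℂ)
      = ((Nat.descFactorial k (2*b+2) : ℕ) : ℂ)
        + ((k - 2*b : ℕ) : ℂ) * (2*((b:ℂ)+1)) * ((Nat.descFactorial k (2*b) : ℕ) : ℂ) := by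
    have h := congrArg (fun n : ℕ => (n : ℂ)) (descID k b)
    push_cast at h
    push_cast
    linear_combination h
  have hD0 : ((2^b * Nat.factorial b : ℕ) : ℂ) ≠ 0 :=
    Nat.cast_ne_zero.mpr (Nat.mul_ne_zero (pow_ne_zero b two_ne_zero) (Nat.factorial_ne_zero b))
  have hcb : ((2^(b+1) * Nat.factorial (b+1) : ℕ) : ℂ)
      = (2*((b:ℂ)+1)) * ((2^b * Nat.factorial b : ℕ) : ℂ) := by
    push_cast [Nat.factorial_succ]
    ring
  rw [gam, gam, gam, show 2*(b+1) = 2*b+2 from by ring, hdesc, hcb]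
  generalize ((Nat.descFactorial k (2*b+2) : ℕ) : ℂ) = d2
  generalize ((Nat.descFactorial k (2*b) : ℕ) : ℂ) = d0
  generalize ((k - 2*b : ℕ) : ℂ) = m
  generalize hDD : ((2^b * Nat.factorial b : ℕ) : ℂ) = D at hD0 ⊢
  have h21 : (2*((b:ℂ)+1)) ≠ 0 := mul_ne_zero two_ne_zero hb1
  generalize hE : (2*((b:ℂ)+1)) = E at h21 ⊢
  simp only [div_eq_mul_inv, mul_inv]
  linear_combination ((Complex.I * ((hb:ℂ))⁻¹)^(b+1) * m * d0 * D⁻¹) * (mul_inv_cancel₀ h21)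

theorem gam_Z2 (hb : ℝ) (k b : ℕ) :
    ((k+1 - 2*b : ℕ) : ℂ) * gam hb (k+1) b = ((k:ℂ)+1) * gam hb k b := by
  have hnat : (k+1-2*b) * Nat.descFactorial (k+1) (2*b)
      = (k+1) * Nat.descFactorial k (2*b) := by
    have h1 := Nat.descFactorial_succ (k+1) (2*b)
    have h2 := Nat.succ_descFactorial_succ k (2*b)
    rw [← h1, h2]
  have hc := congrArg (fun n : ℕ => (n : ℂ)) hnat
  push_cast at hc
  rw [gam, gam]
  linear_combination ((Complex.I/hb)^b / ((2^b * Nat.factorial b : ℕ) : ℂ)) * hc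

theorem Piop_sum_tens {ι : Type*} (hb : ℝ) (s : Finset ι) (c : ι → ℂ) (F G : ι → R3 → ℂ)
    (hF : ∀ i, ContDiff ℝ (⊤ : ℕ∞) (F i)) (hG : ∀ i, ContDiff ℝ (⊤ : ℕ∞) (G i)) :
    Piop hb (fun z => ∑ i ∈ s, c i * (F i z.1 * G i z.2)) =
      fun z => ∑ i ∈ s, c i *
        (dP (F i) z.1 * Bop hb (G i) z.2 - Bop hb (F i) z.1 * dP (G i) z.2) := by
  funext z
  have hstep1 : (fun x => L2 (Bop hb)
        (fun z => ∑ i ∈ s, c i * (F i z.1 * G i z.2)) (x, z.2))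
      = fun x => ∑ i ∈ s, (c i * Bop hb (G i) z.2) * F i x := by
    funext x
    show Bop hb (fun y => ∑ i ∈ s, c i * (F i x * G i y)) z.2 = _
    have h1 : (fun y => ∑ i ∈ s, c i * (F i x * G i y))
        = fun y => ∑ i ∈ s, (c i * F i x) * G i y := by
      funext y; exact Finset.sum_congr rfl fun i _ => by ring
    rw [h1, Bop_sum hb s _ G (fun i _ => Diff _ (hG i))]
    exact Finset.sum_congr rfl fun i _ => by ring
  have hstep2 : (fun x => L2 dP
        (fun z => ∑ i ∈ s, c i * (F i z.1 * G i z.2)) (x, z.2))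
      = fun x => ∑ i ∈ s, (c i * dP (G i) z.2) * F i x := by
    funext x
    show dP (fun y => ∑ i ∈ s, c i * (F i x * G i y)) z.2 = _
    have h1 : (fun y => ∑ i ∈ s, c i * (F i x * G i y))
        = fun y => ∑ i ∈ s, (c i * F i x) * G i y := by
      funext y; exact Finset.sum_congr rfl fun i _ => by ring
    rw [h1, dP_sum s _ G (fun i _ => Diff _ (hG i))]
    exact Finset.sum_congr rfl fun i _ => by ring
  have hN : Nop hb (fun z => ∑ i ∈ s, c i * (F i z.1 * G i z.2)) z
      = ∑ i ∈ s, (c i * Bop hb (G i) z.2) * dP (F i) z.1 := by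
    show dP (fun x => L2 (Bop hb)
        (fun z => ∑ i ∈ s, c i * (F i z.1 * G i z.2)) (x, z.2)) z.1 = _
    rw [hstep1, dP_sum s _ F (fun i _ => Diff _ (hF i))]
  have hM : Mop hb (fun z => ∑ i ∈ s, c i * (F i z.1 * G i z.2)) z
      = -∑ i ∈ s, (c i * dP (G i) z.2) * Bop hb (F i) z.1 := by
    show -(Bop hb (fun x => L2 dP
        (fun z => ∑ i ∈ s, c i * (F i z.1 * G i z.2)) (x, z.2)) z.1) = _
    rw [hstep2, Bop_sum hb s _ F (fun i _ => Diff _ (hF i))]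
  show Nop hb _ z + Mop hb _ z = _
  rw [hN, hM, ← sub_eq_add_neg, ← Finset.sum_sub_distrib]
  exact Finset.sum_congr rfl fun i _ => by ring

section Main2
variable (hb : ℝ) (H Ψ : R3 → ℂ) (hH : ContDiff ℝ (⊤ : ℕ∞) H) (hΨ : ContDiff ℝ (⊤ : ℕ∞) Ψ)
  (hHobs : dT H = 0) (hΨeq : dT Ψ = fun x => Complex.I * Ψ x) (hΨpol : dP Ψ = 0)










include hH hΨ hHobs hΨeq hΨpol in
theorem piop_iter (hhb : hb ≠ 0) (k : ℕ) :
    (Piop hb)^[k] (tens H Ψ) = fun z => ∑ b ∈ Finset.range (k+1),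
      gam hb k b * (Hab H (k-b) b z.1 * Psi hb Ψ (k-2*b) z.2) := by
  induction k with
  | zero =>
      funext z
      show tens H Ψ z = ∑ b ∈ Finset.range 1,
        gam hb 0 b * (Hab H (0-b) b z.1 * Psi hb Ψ (0-2*b) z.2)
      rw [Finset.sum_range_one, gam_k0, one_mul]
      rfl
  | succ k ih =>
      rw [Function.iterate_succ_apply', ih,
        Piop_sum_tens hb (Finset.range (k+1)) (fun b => gam hb k b)
          (fun b => Hab H (k-b) b) (fun b => Psi hb Ψ (k-2*b))
          (fun b => contDiff_Hab H hH (k-b) b) (fun b => contDiff_Psi hb Ψ hΨ (k-2*b))]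
      funext z
      show (∑ b ∈ Finset.range (k+1), gam hb k b *
          (dP (Hab H (k-b) b) z.1 * Bop hb (Psi hb Ψ (k-2*b)) z.2
            - Bop hb (Hab H (k-b) b) z.1 * dP (Psi hb Ψ (k-2*b)) z.2))
        = ∑ b ∈ Finset.range (k+2),
            gam hb (k+1) b * (Hab H (k+1-b) b z.1 * Psi hb Ψ (k+1-2*b) z.2)
      trans (∑ b ∈ Finset.range (k+1),
          (gam hb k b * (Hab H (k+1-b) b z.1 * Psi hb Ψ (k+1-2*b) z.2)
            + (Complex.I/(hb:ℂ)) * ((k-2*b:ℕ):ℂ) * gam hb k b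
              * (Hab H (k-b) (b+1) z.1 * Psi hb Ψ (k+1-2*(b+1)) z.2)))
      · apply Finset.sum_congr rfl
        intro b hbm
        have hble : b ≤ k := Nat.lt_succ_iff.mp (Finset.mem_range.mp hbm)
        rw [dP_Hab H, Bop_Psi hb Ψ, Bop_Hab hb H hH hHobs, dP_Psi hb Ψ hΨ hΨeq hΨpol]
        simp only []
        rw [show k-2*b-1 = k+1-2*(b+1) from by omega, show k-b+1 = k+1-b from by omega]
        by_cases h2 : 2*b ≤ k
        · rw [show k-2*b+1 = k+1-2*b from by omega]; ring
        · rw [gam_zero hb (by omega : k < 2*b)]; ring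
      rw [Finset.sum_add_distrib]
      have hR : ∑ b ∈ Finset.range (k+2),
            gam hb (k+1) b * (Hab H (k+1-b) b z.1 * Psi hb Ψ (k+1-2*b) z.2)
          = (∑ b ∈ Finset.range (k+1),
              gam hb k (b+1) * (Hab H (k-b) (b+1) z.1 * Psi hb Ψ (k+1-2*(b+1)) z.2)
            + ∑ b ∈ Finset.range (k+1),
              (Complex.I/(hb:ℂ)) * ((k-2*b:ℕ):ℂ) * gam hb k b
                * (Hab H (k-b) (b+1) z.1 * Psi hb Ψ (k+1-2*(b+1)) z.2))
            + gam hb (k+1) 0 * (Hab H (k+1-0) 0 z.1 * Psi hb Ψ (k+1-2*0) z.2) := by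
        rw [Finset.sum_range_succ' (fun b =>
          gam hb (k+1) b * (Hab H (k+1-b) b z.1 * Psi hb Ψ (k+1-2*b) z.2)) (k+1)]
        congr 1
        rw [← Finset.sum_add_distrib]
        apply Finset.sum_congr rfl
        intro b _
        rw [show k+1-(b+1) = k-b from by omega, gam_rec hb hhb k b]
        ring
      rw [hR]
      have hL : ∑ b ∈ Finset.range (k+1),
            gam hb k b * (Hab H (k+1-b) b z.1 * Psi hb Ψ (k+1-2*b) z.2)
          = ∑ b ∈ Finset.range (k+1),
              gam hb k (b+1) * (Hab H (k-b) (b+1) z.1 * Psi hb Ψ (k+1-2*(b+1)) z.2)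
            + gam hb k 0 * (Hab H (k+1-0) 0 z.1 * Psi hb Ψ (k+1-2*0) z.2) := by
        have h1 := Finset.sum_range_succ' (fun b =>
          gam hb k b * (Hab H (k+1-b) b z.1 * Psi hb Ψ (k+1-2*b) z.2)) (k+1)
        have h2 := Finset.sum_range_succ (fun b =>
          gam hb k b * (Hab H (k+1-b) b z.1 * Psi hb Ψ (k+1-2*b) z.2)) (k+1)
        rw [gam_zero hb (show k < 2*(k+1) by omega), zero_mul, add_zero] at h2
        rw [h2] at h1
        rw [h1]
        congr 1
        apply Finset.sum_congr rfl
        intro b _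
        rw [show k+1-(b+1) = k-b from by omega]
      rw [hL, gam_k0, gam_k0]
      ring

theorem coeff_cancel (hhb : hb ≠ 0) (k b : ℕ) :
    (((hb:ℂ)/Complex.I)^(k+1) / (Nat.factorial (k+1) : ℂ)) * gam hb (k+1) b
        * (-(Complex.I * ((k+1-2*b : ℕ):ℂ) / hb))
      = -((((hb:ℂ)/Complex.I)^k / (Nat.factorial k : ℂ)) * gam hb k b) := by
  have hz2 := gam_Z2 hb k b
  have hfac : ((Nat.factorial (k+1) : ℕ):ℂ) = ((k:ℂ)+1) * ((Nat.factorial k : ℕ):ℂ) := by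
    push_cast [Nat.factorial_succ]; ring
  have hf0 : ((Nat.factorial k : ℕ):ℂ) ≠ 0 := Nat.cast_ne_zero.mpr (Nat.factorial_ne_zero k)
  have hk1 : ((k:ℂ)+1) ≠ 0 := by
    have : ((k+1 : ℕ) : ℂ) ≠ 0 := Nat.cast_ne_zero.mpr (Nat.succ_ne_zero k)
    push_cast at this; exact this
  have hhb' : ((hb:ℂ)) ≠ 0 := Complex.ofReal_ne_zero.mpr hhb
  rw [hfac]
  field_simp
  have hI : Complex.I * ((hb:ℂ)/Complex.I) = (hb:ℂ) := mul_div_cancel₀ _ Complex.I_ne_zero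
  linear_combination
    (-(((hb:ℂ)/Complex.I)^k * gam hb (k+1) b * ((k+1-2*b : ℕ):ℂ))) * hI
    + (-(((hb:ℂ)/Complex.I)^k * (hb:ℂ))) * hz2

section Endgame
variable (N : ℕ) (hN : ∀ a b : ℕ, N < a + b → dP^[a] (dQ^[b] H) = 0)

include hN in
theorem Hab_vanish {k b : ℕ} (hk : N < k) (hbk : b ≤ k) : Hab H (k-b) b = 0 := by
  have : N < (k-b) + b := by omega
  exact hN (k-b) b this

include hH hΨ hHobs hΨeq hΨpol hN in
theorem moyal_eq (hhb : hb ≠ 0) : moyalProd hb H Ψ = fun x => ∑ k ∈ Finset.range (N+1),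
    ((hb:ℂ)/Complex.I)^k / (Nat.factorial k : ℂ) * ∑ b ∈ Finset.range (k+1),
      gam hb k b * (Hab H (k-b) b x * Psi hb Ψ (k-2*b) x) := by
  funext x
  show ∑' k : ℕ, ((hb : ℂ) / Complex.I) ^ k / (Nat.factorial k : ℂ) *
    (Piop hb)^[k] (tens H Ψ) (x, x) = _
  rw [tsum_eq_sum (s := Finset.range (N+1)) ?hvanish]
  case hvanish =>
    intro k hk
    have hk' : N < k := by
      by_contra h
      exact hk (Finset.mem_range.mpr (by omega))
    rw [piop_iter hb H Ψ hH hΨ hHobs hΨeq hΨpol hhb k]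
    have hz : ∀ b ∈ Finset.range (k+1),
        gam hb k b * (Hab H (k-b) b x * Psi hb Ψ (k-2*b) x) = 0 := by
      intro b hbm
      rw [Hab_vanish H N hN hk' (Nat.lt_succ_iff.mp (Finset.mem_range.mp hbm))]
      simp
    show ((hb : ℂ) / Complex.I) ^ k / (Nat.factorial k : ℂ) *
      (∑ b ∈ Finset.range (k+1), gam hb k b * (Hab H (k-b) b x * Psi hb Ψ (k-2*b) x)) = 0
    rw [Finset.sum_eq_zero hz, mul_zero]
  apply Finset.sum_congr rfl
  intro k _
  rw [piop_iter hb H Ψ hH hΨ hHobs hΨeq hΨpol hhb k]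

end Endgame
end Main2


end MoyalAux

open MoyalAux in
/-- The Moyal quantum product of an observable polynomial in `(p,q)` and a polarized
prequantum wave function is again a polarized prequantum wave function. -/
theorem moyal_product_preserves_polarization (hb : ℝ) (hhbar : 0 < hb)
    (H Ψ : ℝ × ℝ × ℝ → ℂ) (hH : ContDiff ℝ (⊤ : ℕ∞) H) (hΨ : ContDiff ℝ (⊤ : ℕ∞) Ψ)
    (hHobs : dT H = 0)
    (hHpoly : ∃ N : ℕ, ∀ a b : ℕ, N < a + b → dP^[a] (dQ^[b] H) = 0)
    (hΨeq : dT Ψ = fun x => Complex.I * Ψ x) (hΨpol : dP Ψ = 0) :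
    dP (moyalProd hb H Ψ) = 0 ∧
    dT (moyalProd hb H Ψ) = fun x => Complex.I * moyalProd hb H Ψ x := by
  obtain ⟨N, hN⟩ := hHpoly
  have hhb : hb ≠ 0 := ne_of_gt hhbar
  have hflat : moyalProd hb H Ψ = fun x =>
      ∑ p ∈ (Finset.range (N+1)).sigma (fun k => Finset.range (k+1)),
        (((hb:ℂ)/Complex.I)^p.1 / (Nat.factorial p.1 : ℂ) * gam hb p.1 p.2)
          * (Hab H (p.1-p.2) p.2 x * Psi hb Ψ (p.1-2*p.2) x) := by
    rw [moyal_eq hb H Ψ hH hΨ hHobs hΨeq hΨpol N hN hhb]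
    funext x
    rw [Finset.sum_sigma]
    apply Finset.sum_congr rfl
    intro k _
    rw [Finset.mul_sum]
    apply Finset.sum_congr rfl
    intro b _
    ring
  set S := (Finset.range (N+1)).sigma (fun k => Finset.range (k+1)) with hS
  constructor
  · rw [hflat, dP_sum_mul S _ (fun p => Hab H (p.1-p.2) p.2) (fun p => Psi hb Ψ (p.1-2*p.2))
      (fun p _ => Diff _ (contDiff_Hab H hH (p.1-p.2) p.2))
      (fun p _ => Diff _ (contDiff_Psi hb Ψ hΨ (p.1-2*p.2)))]
    funext x
    simp only [Pi.zero_apply]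
    trans (∑ p ∈ S,
        ((((hb:ℂ)/Complex.I)^p.1 / (Nat.factorial p.1 : ℂ) * gam hb p.1 p.2)
            * (Hab H (p.1-p.2+1) p.2 x * Psi hb Ψ (p.1-2*p.2) x)
          + (((hb:ℂ)/Complex.I)^p.1 / (Nat.factorial p.1 : ℂ) * gam hb p.1 p.2
              * (-(Complex.I * ((p.1-2*p.2 : ℕ):ℂ) / hb)))
            * (Hab H (p.1-p.2) p.2 x * Psi hb Ψ (p.1-2*p.2-1) x)))
    · apply Finset.sum_congr rfl
      intro p _
      rw [dP_Hab H, dP_Psi hb Ψ hΨ hΨeq hΨpol]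
      simp only []
      ring
    rw [Finset.sum_add_distrib, hS, Finset.sum_sigma, Finset.sum_sigma]
    -- now double sums over k ∈ range (N+1), b ∈ range (k+1)
    have hSP_top : ∑ b ∈ Finset.range (N+1),
        (((hb:ℂ)/Complex.I)^N / (Nat.factorial N : ℂ) * gam hb N b)
          * (Hab H (N-b+1) b x * Psi hb Ψ (N-2*b) x) = 0 := by
      apply Finset.sum_eq_zero
      intro b hbm
      have hble : b ≤ N := Nat.lt_succ_iff.mp (Finset.mem_range.mp hbm)
      have : Hab H (N-b+1) b = 0 := by
        have h1 : N < (N-b+1) + b := by omega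
        exact hN (N-b+1) b h1
      rw [this]
      simp
    have hSQ_zero : ∑ b ∈ Finset.range 1,
        (((hb:ℂ)/Complex.I)^(0:ℕ) / (Nat.factorial 0 : ℂ) * gam hb 0 b
          * (-(Complex.I * ((0-2*b : ℕ):ℂ) / hb)))
          * (Hab H (0-b) b x * Psi hb Ψ (0-2*b-1) x) = 0 := by
      rw [Finset.sum_range_one]
      simp
    have hQP : ∀ k, (∑ b ∈ Finset.range (k+1+1),
        (((hb:ℂ)/Complex.I)^(k+1) / (Nat.factorial (k+1) : ℂ) * gam hb (k+1) b
          * (-(Complex.I * ((k+1-2*b : ℕ):ℂ) / hb)))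
          * (Hab H (k+1-b) b x * Psi hb Ψ (k+1-2*b-1) x))
        = -∑ b ∈ Finset.range (k+1),
          (((hb:ℂ)/Complex.I)^k / (Nat.factorial k : ℂ) * gam hb k b)
            * (Hab H (k-b+1) b x * Psi hb Ψ (k-2*b) x) := by
      intro k
      rw [Finset.sum_range_succ]
      have htop : (((hb:ℂ)/Complex.I)^(k+1) / (Nat.factorial (k+1) : ℂ) * gam hb (k+1) (k+1)
          * (-(Complex.I * ((k+1-2*(k+1) : ℕ):ℂ) / hb)))
          * (Hab H (k+1-(k+1)) (k+1) x * Psi hb Ψ (k+1-2*(k+1)-1) x) = 0 := by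
        rw [gam_zero hb (by omega : k+1 < 2*(k+1))]
        ring
      rw [htop, add_zero, ← Finset.sum_neg_distrib]
      apply Finset.sum_congr rfl
      intro b hbm
      have hble : b ≤ k := Nat.lt_succ_iff.mp (Finset.mem_range.mp hbm)
      rw [show k+1-2*b-1 = k-2*b from by omega, show k+1-b = k-b+1 from by omega]
      have hcc := coeff_cancel hb hhb k b
      calc (((hb:ℂ)/Complex.I)^(k+1) / (Nat.factorial (k+1) : ℂ) * gam hb (k+1) b
            * (-(Complex.I * ((k+1-2*b : ℕ):ℂ) / hb)))
            * (Hab H (k-b+1) b x * Psi hb Ψ (k-2*b) x)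
          = ((((hb:ℂ)/Complex.I)^(k+1) / (Nat.factorial (k+1) : ℂ)) * gam hb (k+1) b
              * (-(Complex.I * ((k+1-2*b : ℕ):ℂ) / hb)))
            * (Hab H (k-b+1) b x * Psi hb Ψ (k-2*b) x) := by ring
        _ = (-((((hb:ℂ)/Complex.I)^k / (Nat.factorial k : ℂ)) * gam hb k b))
            * (Hab H (k-b+1) b x * Psi hb Ψ (k-2*b) x) := by rw [hcc]
        _ = -((((hb:ℂ)/Complex.I)^k / (Nat.factorial k : ℂ) * gam hb k b)
            * (Hab H (k-b+1) b x * Psi hb Ψ (k-2*b) x)) := by ring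
    rw [Finset.sum_range_succ (fun k => ∑ b ∈ Finset.range (k+1),
        (((hb:ℂ)/Complex.I)^k / (Nat.factorial k : ℂ) * gam hb k b)
          * (Hab H (k-b+1) b x * Psi hb Ψ (k-2*b) x)) N]
    rw [hSP_top, add_zero]
    rw [Finset.sum_range_succ' (fun k => ∑ b ∈ Finset.range (k+1),
        (((hb:ℂ)/Complex.I)^k / (Nat.factorial k : ℂ) * gam hb k b
          * (-(Complex.I * ((k-2*b : ℕ):ℂ) / hb)))
          * (Hab H (k-b) b x * Psi hb Ψ (k-2*b-1) x)) N]
    rw [hSQ_zero, add_zero]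
    rw [Finset.sum_congr rfl (fun k _ => hQP k), ← Finset.sum_add_distrib]
    apply Finset.sum_eq_zero
    intro k _
    ring
  · rw [hflat, dT_sum_mul S _ (fun p => Hab H (p.1-p.2) p.2) (fun p => Psi hb Ψ (p.1-2*p.2))
      (fun p _ => Diff _ (contDiff_Hab H hH (p.1-p.2) p.2))
      (fun p _ => Diff _ (contDiff_Psi hb Ψ hΨ (p.1-2*p.2)))]
    funext x
    simp only []
    rw [Finset.mul_sum]
    apply Finset.sum_congr rfl
    intro p _
    rw [dT_Hab H hH hHobs, dT_Psi hb Ψ hΨ hΨeq]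
    simp only []
    ring
end
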